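/- arXiv:2305.16277 — 6 statements merged into one kernel-verified Lean document; each statement's English description precedes it below -/
import Mathlib

section
/- Let X be a compact Hausdorff space equipped with an action of a countable discrete group G by homeomorphisms, and let μ be a Radon probability measure on X. Then μ is G-quasi-invariant if and only if for every g ∈ G and every pointwise decreasing sequence f_1 ≥ f_2 ≥ ⋯ of continuous functions f_n : X → [0,1], the implication holds: if inf_n ∫_X f_n dμ > 0 then inf_n ∫_X f_n(g⁻¹·x) dμ(x) > 0. -/
open MeasureTheory Filter Topology Pointwise

/-!
If `μ` is quasi-invariant: by dominated convergence `⨅ n, ∫ f n = ∫ ⨅ n, f n`, and a nonnegative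
function has positive integral iff its support is not null; translating by `g⁻¹` moves the
support to its `g`-translate, which is again not null.

Conversely, if `μ E = 0 < μ (g • E)`, inner regularity gives a compact `K ⊆ g • E` with
`0 < μ K`. The null compact set `g⁻¹ • K` is covered by open sets of arbitrarily small measure,
so Urysohn's lemma gives continuous `f n` equal to `1` on `g⁻¹ • K` with `∫ f n → 0`; running
minima make them decreasing. Their translates are `1` on `K`, so their integrals stay above
`μ K`, and the criterion applied to them with `g⁻¹` fails.
-/

open Set

section Integral

variable {X : Type*} [MeasurableSpace X] {μ : Measure X}

theorem measureReal_le_integral_of_one_le {f : X → ℝ} {s : Set X} (hf : Integrable f μ)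
    (hf0 : 0 ≤ f) (hs : ∀ x ∈ s, 1 ≤ f x) : μ.real s ≤ ∫ x, f x ∂μ :=
  ENNReal.toReal_le_of_le_ofReal (integral_nonneg hf0)
    (hf.measure_le_integral (ae_of_all _ hf0) hs)

variable [IsFiniteMeasure μ]

theorem iInf_integral_eq_integral_iInf {f : ℕ → X → ℝ} (hf : ∀ n, Measurable (f n))
    (hf01 : ∀ n x, f n x ∈ Icc (0 : ℝ) 1) (hanti : ∀ n x, f (n + 1) x ≤ f n x) :
    ⨅ n, ∫ x, f n x ∂μ = ∫ x, ⨅ n, f n x ∂μ := by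
  have hint n : Integrable (f n) μ :=
    .of_mem_Icc 0 1 (hf n).aemeasurable (ae_of_all _ (hf01 n))
  have hbdd x : BddBelow (range fun n ↦ f n x) := ⟨0, forall_mem_range.2 fun n ↦ (hf01 n x).1⟩
  have hlim_iInf : Tendsto (fun n ↦ ∫ x, f n x ∂μ) atTop (𝓝 (⨅ n, ∫ x, f n x ∂μ)) := by
    refine tendsto_atTop_ciInf (antitone_nat_of_succ_le fun n ↦
      integral_mono (hint _) (hint n) (hanti n)) ⟨0, forall_mem_range.2 fun n ↦ ?_⟩
    exact integral_nonneg fun x ↦ (hf01 n x).1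
  have hlim_integral : Tendsto (fun n ↦ ∫ x, f n x ∂μ) atTop (𝓝 (∫ x, ⨅ n, f n x ∂μ)) := by
    refine tendsto_integral_of_dominated_convergence (fun _ ↦ 1)
      (fun n ↦ (hf n).aestronglyMeasurable) (integrable_const 1)
      (fun n ↦ ae_of_all _ fun x ↦ ?_) (ae_of_all _ fun x ↦ ?_)
    · rw [Real.norm_of_nonneg (hf01 n x).1]
      exact (hf01 n x).2
    · exact tendsto_atTop_ciInf (antitone_nat_of_succ_le fun n ↦ hanti n x) (hbdd x)
  exact tendsto_nhds_unique hlim_iInf hlim_integral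

end Integral

section QuasiInvariant

variable {X G : Type*} [MeasurableSpace X] {μ : Measure X} [IsFiniteMeasure μ]
  [Group G] [MulAction G X] [MeasurableConstSMul G X]

theorem integral_comp_smul_pos
    (hμ : ∀ (g : G) (E : Set X), MeasurableSet E → μ E = 0 → μ (g • E) = 0)
    {F : X → ℝ} (hF : Measurable F) (hF01 : ∀ x, F x ∈ Icc (0 : ℝ) 1)
    (hpos : 0 < ∫ x, F x ∂μ) (g : G) : 0 < ∫ x, F (g⁻¹ • x) ∂μ := by
  have hF0 : 0 ≤ F := fun x ↦ (hF01 x).1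
  have hFg : Measurable fun x ↦ F (g⁻¹ • x) := hF.comp (measurable_const_smul g⁻¹)
  rw [integral_pos_iff_support_of_nonneg hF0
    (.of_mem_Icc 0 1 hF.aemeasurable (ae_of_all _ hF01))] at hpos
  rw [integral_pos_iff_support_of_nonneg (f := fun x ↦ F (g⁻¹ • x)) (fun x ↦ (hF01 _).1)
    (.of_mem_Icc 0 1 hFg.aemeasurable (ae_of_all _ fun x ↦ hF01 _)),
    ← Function.comp_def, Function.support_comp_eq_preimage, preimage_smul, inv_inv,
    pos_iff_ne_zero]
  intro hzero
  have := hμ g⁻¹ _ (hF.stronglyMeasurable.measurableSet_support.const_smul g) hzero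
  rw [inv_smul_smul] at this
  exact hpos.ne' this

theorem iInf_integral_comp_smul_pos
    (hμ : ∀ (g : G) (E : Set X), MeasurableSet E → μ E = 0 → μ (g • E) = 0)
    {f : ℕ → X → ℝ} (hf : ∀ n, Measurable (f n)) (hf01 : ∀ n x, f n x ∈ Icc (0 : ℝ) 1)
    (hanti : ∀ n x, f (n + 1) x ≤ f n x) (hpos : 0 < ⨅ n, ∫ x, f n x ∂μ) (g : G) :
    0 < ⨅ n, ∫ x, f n (g⁻¹ • x) ∂μ := by
  have hbdd x : BddBelow (range fun n ↦ f n x) := ⟨0, forall_mem_range.2 fun n ↦ (hf01 n x).1⟩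
  have hF01 x : ⨅ n, f n x ∈ Icc (0 : ℝ) 1 :=
    ⟨le_ciInf fun n ↦ (hf01 n x).1, (ciInf_le (hbdd x) 0).trans (hf01 0 x).2⟩
  rw [iInf_integral_eq_integral_iInf hf hf01 hanti] at hpos
  rw [iInf_integral_eq_integral_iInf (f := fun n x ↦ f n (g⁻¹ • x))
    (fun n ↦ (hf n).comp (measurable_const_smul g⁻¹))
    (fun n x ↦ hf01 n _) (fun n x ↦ hanti n _)]
  exact integral_comp_smul_pos hμ (.iInf hf) hF01 hpos g

end QuasiInvariant

section Urysohn

variable {X : Type*} [TopologicalSpace X] [RegularSpace X] [LocallyCompactSpace X]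
  [MeasurableSpace X] [BorelSpace X] {μ : Measure X} [IsFiniteMeasure μ]
  [μ.InnerRegularCompactLTTop] {K : Set X}

theorem IsCompact.exists_continuous_eqOn_one_integral_lt (hK : IsCompact K) {r : ENNReal}
    (hr : μ K < r) :
    ∃ φ : C(X, ℝ), EqOn φ 1 K ∧ (∀ x, φ x ∈ Icc (0 : ℝ) 1) ∧ ENNReal.ofReal (∫ x, φ x ∂μ) < r := by
  obtain ⟨U, hKU, hU, hUr⟩ := hK.exists_isOpen_lt_of_lt r hr
  obtain ⟨φ, hφK, hφU, -, hφ01⟩ := exists_continuous_one_zero_of_isCompact hK hU.isClosed_compl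
    (disjoint_compl_right_iff_subset.2 hKU)
  exact ⟨φ, hφK, hφ01,
    (integral_le_measure (fun x _ ↦ (hφ01 x).2) fun x hx ↦ (hφU hx).le).trans_lt hUr⟩

theorem IsCompact.exists_antitone_continuous_eqOn_one_iInf_integral_eq_zero (hK : IsCompact K)
    (hK0 : μ K = 0) :
    ∃ f : ℕ → C(X, ℝ), (∀ n x, f n x ∈ Icc (0 : ℝ) 1) ∧ (∀ n x, f (n + 1) x ≤ f n x) ∧
      (∀ n, EqOn (f n) 1 K) ∧ ⨅ n, ∫ x, f n x ∂μ = 0 := by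
  have hr (n : ℕ) : μ K < ENNReal.ofReal (1 / (n + 1)) := by
    rw [hK0, ENNReal.ofReal_pos]
    positivity
  choose φ hφK hφ01 hφint using fun n ↦ hK.exists_continuous_eqOn_one_integral_lt (hr n)
  set f : ℕ → C(X, ℝ) := fun n ↦ (Finset.range (n + 1)).inf' Finset.nonempty_range_add_one φ
  have hf_apply n x : f n x = (Finset.range (n + 1)).inf' Finset.nonempty_range_add_one (φ · x) :=
    ContinuousMap.inf'_apply _ _ _
  have hf_le n x : f n x ≤ φ n x := by
    rw [hf_apply]
    exact Finset.inf'_le _ (Finset.self_mem_range_succ n)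
  have hf01 n x : f n x ∈ Icc (0 : ℝ) 1 := by
    refine ⟨?_, (hf_le n x).trans (hφ01 n x).2⟩
    rw [hf_apply]
    exact Finset.le_inf' _ _ fun k _ ↦ (hφ01 k x).1
  have hf_int n : Integrable (f n) μ :=
    .of_mem_Icc 0 1 (f n).continuous.aemeasurable (ae_of_all _ (hf01 n))
  refine ⟨f, hf01, fun n x ↦ ?_, fun n x hx ↦ ?_, ?_⟩
  · simp only [hf_apply]
    exact Finset.inf'_mono (φ · x) (Finset.range_subset_range.2 (n + 1).le_succ) _
  · exact le_antisymm ((hf_le n x).trans (hφK n hx).le)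
      (by rw [hf_apply]; exact Finset.le_inf' _ _ fun k _ ↦ (hφK k hx).ge)
  refine le_antisymm (ge_of_tendsto' tendsto_one_div_add_atTop_nhds_zero_nat fun n ↦ ?_)
    (le_ciInf fun n ↦ integral_nonneg fun x ↦ (hf01 n x).1)
  calc ⨅ n, ∫ x, f n x ∂μ ≤ ∫ x, f n x ∂μ :=
        ciInf_le ⟨0, forall_mem_range.2 fun n ↦ integral_nonneg fun x ↦ (hf01 n x).1⟩ n
    _ ≤ ∫ x, φ n x ∂μ := integral_mono (hf_int n)
        (.of_mem_Icc 0 1 (φ n).continuous.aemeasurable (ae_of_all _ (hφ01 n))) (hf_le n)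
    _ ≤ 1 / (n + 1) := ((ENNReal.ofReal_lt_ofReal_iff (by positivity)).1 (hφint n)).le

end Urysohn

theorem stmt0_general {X : Type*} [TopologicalSpace X] [CompactSpace X] [T2Space X]
    [MeasurableSpace X] [BorelSpace X]
    {G : Type*} [Group G] [MulAction G X] [ContinuousConstSMul G X]
    (μ : Measure X) [IsProbabilityMeasure μ] (hreg : μ.Regular) :
    (∀ (g : G) (E : Set X), MeasurableSet E → μ E = 0 → μ (g • E) = 0) ↔
      ∀ (g : G) (f : ℕ → X → ℝ),
        (∀ n, Continuous (f n)) →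
        (∀ n x, f n x ∈ Set.Icc (0 : ℝ) 1) →
        (∀ n x, f (n + 1) x ≤ f n x) →
        (0 < ⨅ n, ∫ x, f n x ∂μ) →
        (0 < ⨅ n, ∫ x, f n (g⁻¹ • x) ∂μ) := by
  refine ⟨fun hμ g f hf hf01 hanti hpos ↦
    iInf_integral_comp_smul_pos hμ (fun n ↦ (hf n).measurable) hf01 hanti hpos g, ?_⟩
  intro h g E hE hE0
  by_contra hne
  obtain ⟨K, hKE, hK, hKpos⟩ := (hE.const_smul g).exists_lt_isCompact (pos_iff_ne_zero.2 hne)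
  have hK0 : μ (g⁻¹ • K) = 0 :=
    measure_mono_null (by simpa using smul_set_mono (a := g⁻¹) hKE) hE0
  obtain ⟨f, hf01, hanti, hf1, hf_inf⟩ :=
    (hK.smul g⁻¹).exists_antitone_continuous_eqOn_one_iInf_integral_eq_zero hK0
  have hpos : 0 < ⨅ n, ∫ x, f n (g⁻¹ • x) ∂μ := by
    refine (ENNReal.toReal_pos hKpos.ne' (measure_ne_top μ K)).trans_le (le_ciInf fun n ↦ ?_)
    refine measureReal_le_integral_of_one_le
      (.of_mem_Icc 0 1 (by fun_prop) (ae_of_all _ fun x ↦ hf01 n _))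
      (fun x ↦ (hf01 n _).1) fun x hx ↦ (hf1 n (smul_mem_smul_set hx)).ge
  simpa [hf_inf] using h g⁻¹ (fun n x ↦ f n (g⁻¹ • x)) (fun n ↦ by fun_prop)
    (fun n x ↦ hf01 n _) (fun n x ↦ hanti n _) hpos

/-- For a Radon probability measure `μ` on a compact Hausdorff space `X`
endowed with an action of a countable discrete group `G` by homeomorphisms, `μ` is
`G`-quasi-invariant if and only if for every `g ∈ G` and every pointwise decreasing sequence
of continuous functions `f n : X → [0,1]`, `0 < ⨅ n, ∫ f n dμ` implies
`0 < ⨅ n, ∫ f n (g⁻¹ • x) dμ(x)`. -/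
theorem stmt0 {X : Type*} [TopologicalSpace X] [CompactSpace X] [T2Space X]
    [MeasurableSpace X] [BorelSpace X]
    {G : Type*} [Group G] [Countable G] [MulAction G X] [ContinuousConstSMul G X]
    (μ : Measure X) [IsProbabilityMeasure μ] (hreg : μ.Regular) :
    (∀ (g : G) (E : Set X), MeasurableSet E → μ E = 0 → μ (g • E) = 0) ↔
      ∀ (g : G) (f : ℕ → X → ℝ),
        (∀ n, Continuous (f n)) →
        (∀ n x, f n x ∈ Set.Icc (0 : ℝ) 1) →
        (∀ n x, f (n + 1) x ≤ f n x) →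
        (0 < ⨅ n, ∫ x, f n x ∂μ) →
        (0 < ⨅ n, ∫ x, f n (g⁻¹ • x) ∂μ) :=
  stmt0_general μ hreg
end

section
/- Let ψ : Y → Z be a continuous surjection between compact Hausdorff spaces and let U ⊆ Z be an open subset. Then the closed two-sided ideal of the C*-algebra C(Y, ℂ) generated by the set {g ∘ ψ : g ∈ C(Z, ℂ), g vanishes on Z ∖ U} is equal to {f ∈ C(Y, ℂ) : f vanishes on Y ∖ ψ⁻¹(U)}. -/
/-- For a continuous surjection `ψ : Y → Z` between compact Hausdorff spaces
and an open set `U ⊆ Z`, the closed ideal of `C(Y, ℂ)` generated by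
`{g ∘ ψ : g ∈ C(Z, ℂ), g vanishes on Z \ U}` equals
`{f ∈ C(Y, ℂ) : f vanishes on Y \ ψ⁻¹(U)}`. -/
theorem stmt1 {Y Z : Type*} [TopologicalSpace Y] [CompactSpace Y] [T2Space Y]
    [TopologicalSpace Z] [CompactSpace Z] [T2Space Z]
    (ψ : C(Y, Z)) (hsurj : Function.Surjective ψ) (U : Set Z) (hU : IsOpen U) :
    closure ((Ideal.span {f : C(Y, ℂ) |
        ∃ g : C(Z, ℂ), (∀ z ∉ U, g z = 0) ∧ f = g.comp ψ} : Ideal C(Y, ℂ)) : Set C(Y, ℂ)) =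
      {f : C(Y, ℂ) | ∀ y ∉ (ψ : Y → Z) ⁻¹' U, f y = 0} := by
  have hRHS : {f : C(Y, ℂ) | ∀ y ∉ (ψ : Y → Z) ⁻¹' U, f y = 0} =
      (ContinuousMap.idealOfSet ℂ ((ψ : Y → Z) ⁻¹' U) : Set C(Y, ℂ)) := by
    ext f
    simp [ContinuousMap.mem_idealOfSet]
  rw [hRHS]
  apply le_antisymm
  · -- closure of span ⊆ idealOfSet
    refine (ContinuousMap.idealOfSet_closed ℂ _).closure_subset_iff.mpr ?_
    refine SetLike.coe_subset_coe.mpr (Ideal.span_le.mpr ?_)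
    rintro f ⟨g, hg, rfl⟩
    intro y hy
    simp only [Set.mem_compl_iff, Set.mem_preimage] at hy
    exact hg (ψ y) hy
  · -- idealOfSet ⊆ closure of span
    intro f hf
    rw [Metric.mem_closure_iff]
    intro ε hε
    -- compact set where |f| ≥ ε/2
    set K : Set Y := {y | ε / 2 ≤ ‖f y‖} with hK
    have hKclosed : IsClosed K :=
      isClosed_le continuous_const (f.continuous.norm)
    have hKU : K ⊆ (ψ : Y → Z) ⁻¹' U := by
      intro y hy
      by_contra hyU
      have := ContinuousMap.mem_idealOfSet.mp hf (Set.mem_compl hyU)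
      rw [hK] at hy
      simp only [Set.mem_setOf_eq, this, norm_zero] at hy
      linarith
    have hKZ : IsCompact ((ψ : Y → Z) '' K) :=
      (hKclosed.isCompact).image ψ.continuous
    have hdisj : Disjoint Uᶜ ((ψ : Y → Z) '' K) := by
      rw [Set.disjoint_left]
      rintro z hz ⟨y, hyK, rfl⟩
      exact hz (hKU hyK)
    obtain ⟨g, hg0, hg1, hg01⟩ := exists_continuous_zero_one_of_isCompact
      hU.isClosed_compl.isCompact hKZ.isClosed hdisj
    -- gC : complex version of g
    set gC : C(Z, ℂ) := ⟨fun z => (g z : ℂ), by fun_prop⟩ with hgC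
    have hmem : f * gC.comp ψ ∈ (Ideal.span {f : C(Y, ℂ) |
        ∃ g : C(Z, ℂ), (∀ z ∉ U, g z = 0) ∧ f = g.comp ψ} : Ideal C(Y, ℂ)) := by
      refine Ideal.mul_mem_left _ _ (Ideal.subset_span ?_)
      exact ⟨gC, fun z hz => by simp [hgC, hg0 hz], rfl⟩
    refine ⟨f * gC.comp ψ, hmem, ?_⟩
    rw [dist_eq_norm]
    refine lt_of_le_of_lt (ContinuousMap.norm_le _ (by positivity) |>.mpr ?_)
      (half_lt_self hε)
    intro y
    simp only [ContinuousMap.sub_apply, ContinuousMap.mul_apply,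
      ContinuousMap.comp_apply, hgC, ContinuousMap.coe_mk]
    by_cases hy : y ∈ K
    · have : g (ψ y) = 1 := hg1 ⟨y, hy, rfl⟩
      simp [this]
      positivity
    · have hfy : ‖f y‖ < ε / 2 := by
        rw [hK] at hy; simpa using not_le.mp hy
      have h01 : g (ψ y) ∈ Set.Icc (0:ℝ) 1 := hg01 (ψ y)
      calc ‖f y - f y * (g (ψ y) : ℂ)‖ = ‖f y‖ * ‖(1 : ℂ) - (g (ψ y) : ℂ)‖ := by
            rw [← norm_mul]; ring_nf
        _ ≤ ‖f y‖ * 1 := by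
            refine mul_le_mul_of_nonneg_left ?_ (norm_nonneg _)
            have : ((1 : ℂ) - (g (ψ y) : ℂ)) = ((1 - g (ψ y) : ℝ) : ℂ) := by
              push_cast; ring
            rw [this, Complex.norm_real, Real.norm_eq_abs, abs_le]
            constructor <;> [linarith [h01.2]; linarith [h01.1]]
        _ ≤ ε / 2 := by rw [mul_one]; exact hfy.le
end

section
/- Let 𝔛 be a countable set with an action of a countable discrete group G, fix an enumeration G = {s_i : i ∈ ℕ}, let ω be a free ultrafilter on ℕ, let (x_n) be a sequence in 𝔛, and let (α_i) be strictly positive real numbers with ∑_{i,j} α_i α_j < ∞ (equivalently, (α_i) is summable). Set ξ_n(y) = ∑_{i∈ℕ} α_i 1[s_i·x_n = y] for y ∈ 𝔛, and for p ∈ {2, 4} define, for every sequence f = (f_n) of uniformly bounded functions f_n : 𝔛 → [0, ∞), Λ_p(f) = lim_{n→ω} ∑_{y∈𝔛} f_n(y) ξ_n(y)^p (the ultrafilter limit, which exists since the sums are uniformly bounded). Then for p ∈ {2, 4}, for every g ∈ G and every sequence (f^{(j)})_{j∈ℕ}, where f^{(j)} = (f^{(j)}_n)_n satisfies 0 ≤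 f^{(j+1)}_n ≤ f^{(j)}_n ≤ 1 pointwise for all j, n: if inf_j Λ_p(f^{(j)}) = 0 then inf_j Λ_p((f^{(j)}_n ∘ g)_n) = 0, where (f ∘ g)(y) = f(g·y). (This expresses the quasi-invariance of the probability measures μ_ξ and μ_{ξ²} on the spectrum of the ultraproduct ℓ∞(𝔛)_ω.) -/
open Filter Topology

/-! Since `g sᵢ = s_{k i}` for some `k i`, each of the first `N` atoms of `ξ = ∑ᵢ αᵢ δ_{sᵢ x}`
is carried by `g` onto an atom of `ξ` of weight `α_{k i} > 0`. Hence
`ξ ≤ C_N · (ξ ∘ g) + T_N` pointwise, where the tail `T_N` has mass `∑_{i ≥ N} αᵢ` and `C_N`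
does not depend on `x`. With `(a + b)ᵖ ≤ 2ᵖ⁻¹ (aᵖ + bᵖ)` and `∑ Tᵖ ≤ (∑ T)ᵖ` this gives
`Λ_p(f ∘ g) ≤ K_N Λ_p(f) + 2ᵖ⁻¹ (∑_{i ≥ N} αᵢ)ᵖ` for every `f`, and the error term tends to `0`
as `N → ∞`. -/

section FiberWeight

variable {𝔛 : Type*} [DecidableEq 𝔛] {α : ℕ → ℝ}

/-- The weight function `∑ᵢ αᵢ δ_{t i}`; the paper's `ξₙ` is `fiberWeight α (fun i => sᵢ • xₙ)`. -/
noncomputable def fiberWeight (α : ℕ → ℝ) (t : ℕ → 𝔛) (y : 𝔛) : ℝ :=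
  ∑' i, if t i = y then α i else 0

lemma fiberWeight_eq_tsum_preimage (t : ℕ → 𝔛) (y : 𝔛) :
    fiberWeight α t y = ∑' i : t ⁻¹' {y}, α i := by
  rw [fiberWeight, tsum_subtype]
  exact tsum_congr fun i => by by_cases h : t i = y <;> simp [h]

lemma hasSum_fiberWeight (hα : Summable α) (t : ℕ → 𝔛) :
    HasSum (fiberWeight α t) (∑' i, α i) := by
  simpa only [← fiberWeight_eq_tsum_preimage] using hα.hasSum.tsum_fiberwise t

lemma ite_eq_weight_nonneg (hα0 : ∀ i, 0 ≤ α i) (t : ℕ → 𝔛) (y : 𝔛) (i : ℕ) :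
    0 ≤ if t i = y then α i else 0 := by
  split_ifs <;> simp [hα0 i]

lemma fiberWeight_nonneg (hα0 : ∀ i, 0 ≤ α i) (t : ℕ → 𝔛) (y : 𝔛) : 0 ≤ fiberWeight α t y :=
  tsum_nonneg (ite_eq_weight_nonneg hα0 t y)

lemma summable_ite_eq_weight (hα0 : ∀ i, 0 ≤ α i) (hα : Summable α) (t : ℕ → 𝔛) (y : 𝔛) :
    Summable fun i => if t i = y then α i else 0 :=
  hα.of_nonneg_of_le (ite_eq_weight_nonneg hα0 t y) fun i => by split_ifs <;> simp [hα0 i]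

lemma le_fiberWeight (hα0 : ∀ i, 0 ≤ α i) (hα : Summable α) (t : ℕ → 𝔛) (i : ℕ) :
    α i ≤ fiberWeight α t (t i) := by
  simpa [fiberWeight] using
    (summable_ite_eq_weight hα0 hα t (t i)).le_tsum i fun j _ => ite_eq_weight_nonneg hα0 t _ j

lemma fiberWeight_eq_sum_range_add (hα0 : ∀ i, 0 ≤ α i) (hα : Summable α) (t : ℕ → 𝔛)
    (N : ℕ) (y : 𝔛) :
    fiberWeight α t y = (∑ i ∈ Finset.range N, if t i = y then α i else 0) +
      fiberWeight (fun i => α (i + N)) (fun i => t (i + N)) y :=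
  ((summable_ite_eq_weight hα0 hα t y).sum_add_tsum_nat_add N).symm

lemma fiberWeight_le_mul_add_tail (hα : ∀ i, 0 < α i) (hαs : Summable α) (t : ℕ → 𝔛)
    (φ : 𝔛 → 𝔛) (k : ℕ → ℕ) (hk : ∀ i, t (k i) = φ (t i)) (N : ℕ) (y : 𝔛) :
    fiberWeight α t y ≤ (∑ i ∈ Finset.range N, α i / α (k i)) * fiberWeight α t (φ y) +
      fiberWeight (fun i => α (i + N)) (fun i => t (i + N)) y := by
  have hα0 : ∀ i, 0 ≤ α i := fun i => (hα i).le
  rw [fiberWeight_eq_sum_range_add hα0 hαs t N y, Finset.sum_mul]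
  gcongr with i
  split_ifs with hi
  · have hφ : α (k i) ≤ fiberWeight α t (φ y) := hi ▸ hk i ▸ le_fiberWeight hα0 hαs t (k i)
    calc α i = α i / α (k i) * α (k i) := (div_mul_cancel₀ _ (hα (k i)).ne').symm
      _ ≤ α i / α (k i) * fiberWeight α t (φ y) := by gcongr; exact div_nonneg (hα0 i) (hα0 _)
  · exact mul_nonneg (div_nonneg (hα0 i) (hα0 _)) (fiberWeight_nonneg hα0 t _)

end FiberWeight

section PowerSums

variable {𝔛 : Type*} {ζ F : 𝔛 → ℝ} {p : ℕ}

lemma mul_pow_le_tsum_pow_pred_mul (hζ0 : ∀ y, 0 ≤ ζ y) (hζ : Summable ζ)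
    (hF1 : ∀ y, F y ≤ 1) (hp : p ≠ 0) (y : 𝔛) :
    F y * ζ y ^ p ≤ (∑' y, ζ y) ^ (p - 1) * ζ y := by
  rw [← pow_sub_one_mul hp, ← mul_assoc]
  refine mul_le_mul_of_nonneg_right ?_ (hζ0 y)
  calc F y * ζ y ^ (p - 1) ≤ 1 * ζ y ^ (p - 1) :=
        mul_le_mul_of_nonneg_right (hF1 y) (pow_nonneg (hζ0 y) _)
    _ ≤ (∑' y, ζ y) ^ (p - 1) := by
      rw [one_mul]
      exact pow_le_pow_left₀ (hζ0 y) (hζ.le_tsum y fun z _ => hζ0 z) _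

lemma summable_mul_pow (hζ0 : ∀ y, 0 ≤ ζ y) (hζ : Summable ζ)
    (hF0 : ∀ y, 0 ≤ F y) (hF1 : ∀ y, F y ≤ 1) (hp : p ≠ 0) :
    Summable fun y => F y * ζ y ^ p :=
  (hζ.mul_left _).of_nonneg_of_le (fun y => mul_nonneg (hF0 y) (pow_nonneg (hζ0 y) p))
    (mul_pow_le_tsum_pow_pred_mul hζ0 hζ hF1 hp)

lemma tsum_mul_pow_le (hζ0 : ∀ y, 0 ≤ ζ y) (hζ : Summable ζ)
    (hF0 : ∀ y, 0 ≤ F y) (hF1 : ∀ y, F y ≤ 1) (hp : p ≠ 0) :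
    ∑' y, F y * ζ y ^ p ≤ (∑' y, ζ y) ^ p := by
  calc ∑' y, F y * ζ y ^ p ≤ ∑' y, (∑' y, ζ y) ^ (p - 1) * ζ y :=
        (summable_mul_pow hζ0 hζ hF0 hF1 hp).tsum_le_tsum
          (mul_pow_le_tsum_pow_pred_mul hζ0 hζ hF1 hp) (hζ.mul_left _)
    _ = (∑' y, ζ y) ^ p := by rw [tsum_mul_left, pow_sub_one_mul hp]

end PowerSums

section QuasiInvariance

variable {𝔛 : Type*} [DecidableEq 𝔛] {α : ℕ → ℝ} {p : ℕ}

lemma tsum_comp_mul_fiberWeight_pow_le (hα : ∀ i, 0 < α i) (hαs : Summable α) (t : ℕ → 𝔛)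
    (e : 𝔛 ≃ 𝔛) (k : ℕ → ℕ) (hk : ∀ i, t (k i) = e (t i)) (F : 𝔛 → ℝ)
    (hF0 : ∀ y, 0 ≤ F y) (hF1 : ∀ y, F y ≤ 1) (hp : p ≠ 0) (N : ℕ) :
    ∑' y, F (e y) * fiberWeight α t y ^ p ≤
      2 ^ (p - 1) * (∑ i ∈ Finset.range N, α i / α (k i)) ^ p *
          ∑' y, F y * fiberWeight α t y ^ p +
        2 ^ (p - 1) * (∑' i, α (i + N)) ^ p := by
  have hα0 : ∀ i, 0 ≤ α i := fun i => (hα i).le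
  set ξ := fiberWeight α t
  set T := fiberWeight (fun i => α (i + N)) (fun i => t (i + N))
  set C := ∑ i ∈ Finset.range N, α i / α (k i)
  have hξ0 : ∀ y, 0 ≤ ξ y := fiberWeight_nonneg hα0 t
  have hξ : Summable ξ := (hasSum_fiberWeight hαs t).summable
  have hT0 : ∀ y, 0 ≤ T y := fiberWeight_nonneg (fun i => hα0 (i + N)) _
  have hT : HasSum T (∑' i, α (i + N)) :=
    hasSum_fiberWeight ((summable_nat_add_iff N).2 hαs) _
  have hC0 : 0 ≤ C := Finset.sum_nonneg fun i _ => div_nonneg (hα0 i) (hα0 _)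
  have hTp : Summable fun y => T y ^ p := by
    simpa using summable_mul_pow (F := fun _ => 1) hT0 hT.summable (by simp) (by simp) hp
  have hpt : ∀ y, F (e y) * ξ y ^ p ≤
      2 ^ (p - 1) * C ^ p * (F (e y) * ξ (e y) ^ p) + 2 ^ (p - 1) * T y ^ p := fun y =>
    calc F (e y) * ξ y ^ p ≤ F (e y) * (2 ^ (p - 1) * ((C * ξ (e y)) ^ p + T y ^ p)) := by
          gcongr
          · exact hF0 _
          · calc ξ y ^ p ≤ (C * ξ (e y) + T y) ^ p :=
                  pow_le_pow_left₀ (hξ0 y) (fiberWeight_le_mul_add_tail hα hαs t e k hk N y) p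
              _ ≤ _ := add_pow_le (mul_nonneg hC0 (hξ0 _)) (hT0 y) p
      _ = 2 ^ (p - 1) * C ^ p * (F (e y) * ξ (e y) ^ p) +
            2 ^ (p - 1) * (F (e y) * T y ^ p) := by ring
      _ ≤ _ := by
          gcongr
          exact mul_le_of_le_one_left (pow_nonneg (hT0 y) p) (hF1 _)
  have hξe : Summable fun y => F (e y) * ξ (e y) ^ p :=
    summable_mul_pow (fun y => hξ0 (e y)) (e.summable_iff.2 hξ) (fun y => hF0 (e y))
      (fun y => hF1 (e y)) hp
  calc ∑' y, F (e y) * ξ y ^ p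
      ≤ ∑' y, (2 ^ (p - 1) * C ^ p * (F (e y) * ξ (e y) ^ p) + 2 ^ (p - 1) * T y ^ p) :=
        (summable_mul_pow hξ0 hξ (fun y => hF0 (e y)) (fun y => hF1 (e y)) hp).tsum_le_tsum hpt
          ((hξe.mul_left _).add (hTp.mul_left _))
    _ = 2 ^ (p - 1) * C ^ p * ∑' y, F y * ξ y ^ p + 2 ^ (p - 1) * ∑' y, T y ^ p := by
        rw [(hξe.mul_left _).tsum_add (hTp.mul_left _), tsum_mul_left, tsum_mul_left,
          e.tsum_eq fun y => F y * ξ y ^ p]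
    _ ≤ _ := by
        gcongr
        simpa [hT.tsum_eq] using
          tsum_mul_pow_le (F := fun _ => 1) hT0 hT.summable (by simp) (by simp) hp

lemma exists_tsum_comp_mul_fiberWeight_pow_le (hα : ∀ i, 0 < α i) (hαs : Summable α)
    (k : ℕ → ℕ) (hp : p ≠ 0) {ε : ℝ} (hε : 0 < ε) :
    ∃ K, ∀ (t : ℕ → 𝔛) (e : 𝔛 ≃ 𝔛), (∀ i, t (k i) = e (t i)) →
      ∀ F : 𝔛 → ℝ, (∀ y, 0 ≤ F y) → (∀ y, F y ≤ 1) →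
        ∑' y, F (e y) * fiberWeight α t y ^ p ≤ K * ∑' y, F y * fiberWeight α t y ^ p + ε := by
  have htail : Tendsto (fun N => 2 ^ (p - 1) * (∑' i, α (i + N)) ^ p) atTop (𝓝 0) := by
    simpa [hp] using ((tendsto_sum_nat_add α).pow p).const_mul ((2 : ℝ) ^ (p - 1))
  obtain ⟨N, hN⟩ := (htail.eventually (gt_mem_nhds hε)).exists
  exact ⟨_, fun t e hk F hF0 hF1 =>
    (tsum_comp_mul_fiberWeight_pow_le hα hαs t e k hk F hF0 hF1 hp N).trans (by gcongr)⟩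

end QuasiInvariance

lemma Ultrafilter.tendsto_limUnder_of_forall_mem {ι X : Type*} [TopologicalSpace X]
    [T2Space X] [Nonempty X] (ω : Ultrafilter ι) {K : Set X} (hK : IsCompact K) {u : ι → X}
    (hu : ∀ i, u i ∈ K) :
    Tendsto u ω (𝓝 (limUnder ω u)) ∧ limUnder ω u ∈ K := by
  obtain ⟨c, hcK, hc⟩ := hK.ultrafilter_le_nhds (ω.map u)
    (by simpa using univ_mem' (f := (ω : Filter ι)) (s := u ⁻¹' K) hu)
  have hc : Tendsto u ω (𝓝 c) := hc
  rw [hc.limUnder_eq]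
  exact ⟨hc, hcK⟩

lemma iInf_eq_zero_of_le_mul_add {ι : Type*} [Nonempty ι] {u v : ι → ℝ}
    (hu0 : ∀ j, 0 ≤ u j) (hv0 : ∀ j, 0 ≤ v j) (hu : ⨅ j, u j = 0)
    (hvu : ∀ ε > 0, ∃ K, ∀ j, v j ≤ K * u j + ε) : ⨅ j, v j = 0 := by
  refine le_antisymm (le_of_forall_pos_le_add fun ε hε => ?_) (le_ciInf hv0)
  obtain ⟨K, hK⟩ := hvu (ε / 2) (half_pos hε)
  obtain ⟨j, hj⟩ : ∃ j, u j < ε / 2 / (|K| + 1) :=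
    exists_lt_of_ciInf_lt (by rw [hu]; positivity)
  have hKu : K * u j ≤ ε / 2 := by
    rw [lt_div_iff₀ (by positivity)] at hj
    nlinarith [le_abs_self K, hu0 j]
  calc ⨅ j, v j ≤ v j := ciInf_le ⟨0, Set.forall_mem_range.2 hv0⟩ j
    _ ≤ 0 + ε := by linarith [hK j]

theorem stmt6_general {𝔛 : Type*} [DecidableEq 𝔛]
    {G : Type*} [Group G] [MulAction G 𝔛]
    (s : ℕ → G) (hs : Function.Surjective s)
    (ω : Ultrafilter ℕ)
    (x : ℕ → 𝔛) (α : ℕ → ℝ) (hα : ∀ i, 0 < α i) (hαsum : Summable α)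
    (ξ : ℕ → 𝔛 → ℝ) (hξ : ∀ n y, ξ n y = ∑' i : ℕ, if s i • x n = y then α i else 0)
    (p : ℕ) (hp : p = 2 ∨ p = 4) (g : G)
    (f : ℕ → ℕ → 𝔛 → ℝ)
    (hf0 : ∀ j n y, 0 ≤ f j n y) (hf1 : ∀ j n y, f j n y ≤ 1)
    (h : ⨅ j : ℕ, limUnder (ω : Filter ℕ)
        (fun n => ∑' y : 𝔛, f j n y * ξ n y ^ p) = 0) :
    ⨅ j : ℕ, limUnder (ω : Filter ℕ)
        (fun n => ∑' y : 𝔛, f j n (g • y) * ξ n y ^ p) = 0 := by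
  have hp0 : p ≠ 0 := by omega
  have hξ' : ∀ n, ξ n = fiberWeight α (fun i => s i • x n : ℕ → 𝔛) := fun n => funext (hξ n)
  have hlim : ∀ F : ℕ → 𝔛 → ℝ, (∀ n y, 0 ≤ F n y) → (∀ n y, F n y ≤ 1) →
      Tendsto (fun n => ∑' y, F n y * ξ n y ^ p) ω
          (𝓝 (limUnder ω fun n => ∑' y, F n y * ξ n y ^ p)) ∧
        limUnder ω (fun n => ∑' y, F n y * ξ n y ^ p) ∈ Set.Icc 0 ((∑' i, α i) ^ p) := by
    refine fun F hF0 hF1 => ω.tendsto_limUnder_of_forall_mem isCompact_Icc fun n => ?_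
    have hξ0 := fiberWeight_nonneg (fun i => (hα i).le) (fun i => s i • x n : ℕ → 𝔛)
    have hξsum := hasSum_fiberWeight hαsum (fun i => s i • x n : ℕ → 𝔛)
    rw [hξ' n, ← hξsum.tsum_eq]
    exact ⟨tsum_nonneg fun y => mul_nonneg (hF0 n y) (pow_nonneg (hξ0 y) p),
      tsum_mul_pow_le hξ0 hξsum.summable (hF0 n) (hF1 n) hp0⟩
  have hlim_comp (j : ℕ) :=
    hlim (fun n y => f j n (g • y)) (fun n y => hf0 j n _) fun n y => hf1 j n _
  choose k hk using fun i => hs (g * s i)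
  refine iInf_eq_zero_of_le_mul_add (fun j => (hlim _ (hf0 j) (hf1 j)).2.1)
    (fun j => (hlim_comp j).2.1) h fun ε hε => ?_
  obtain ⟨K, hK⟩ := exists_tsum_comp_mul_fiberWeight_pow_le (𝔛 := 𝔛) hα hαsum k hp0 hε
  refine ⟨K, fun j => le_of_tendsto_of_tendsto' (hlim_comp j).1
    (((hlim _ (hf0 j) (hf1 j)).1.const_mul K).add_const ε) fun n => ?_⟩
  rw [hξ' n]
  exact hK _ (MulAction.toPerm g) (fun i => by simp [hk, mul_smul]) _ (hf0 j n) (hf1 j n)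

/-- Quasi-invariance of the measures `μ_ξ` (p = 2) and `μ_{ξ²}` (p = 4) on the
spectrum of `ℓ∞(𝔛)_ω`, where `ξ_n = ∑ᵢ αᵢ δ_{sᵢ • xₙ}` is built from a sequence `(xₙ)` in the
countable `G`-set `𝔛`, an enumeration `(sᵢ)` of `G` and strictly positive summable weights
`(αᵢ)`; `ω` is a free ultrafilter on `ℕ`.  Quasi-invariance is expressed through decreasing
sequences of positive "functions" as in Lemma 1.7 of the paper. -/
theorem stmt6 {𝔛 : Type*} [Countable 𝔛] [DecidableEq 𝔛]
    {G : Type*} [Group G] [Countable G] [MulAction G 𝔛]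
    (s : ℕ → G) (hs : Function.Surjective s)
    (ω : Ultrafilter ℕ) (hω : (ω : Filter ℕ) ≤ Filter.cofinite)
    (x : ℕ → 𝔛) (α : ℕ → ℝ) (hα : ∀ i, 0 < α i) (hαsum : Summable α)
    (ξ : ℕ → 𝔛 → ℝ) (hξ : ∀ n y, ξ n y = ∑' i : ℕ, if s i • x n = y then α i else 0)
    (p : ℕ) (hp : p = 2 ∨ p = 4) (g : G)
    (f : ℕ → ℕ → 𝔛 → ℝ)
    (hf0 : ∀ j n y, 0 ≤ f j n y) (hf1 : ∀ j n y, f j n y ≤ 1)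
    (hfdec : ∀ j n y, f (j + 1) n y ≤ f j n y)
    (h : ⨅ j : ℕ, limUnder (ω : Filter ℕ)
        (fun n => ∑' y : 𝔛, f j n y * ξ n y ^ p) = 0) :
    ⨅ j : ℕ, limUnder (ω : Filter ℕ)
        (fun n => ∑' y : 𝔛, f j n (g • y) * ξ n y ^ p) = 0 :=
  stmt6_general s hs ω x α hα hαsum ξ hξ p hp g f hf0 hf1 h
end

section
/- Let X be a compact Hausdorff space with an action of a countable discrete group G by homeomorphisms. Say that a finite G-quasi-invariant Radon measure ν on X satisfies the approximate invariance condition if for every ε > 0, every finite subset F ⊆ G and every finite family A of bounded nonnegative Borel functions on X, there exists a finitely supported function g from G to the Borel functions X → [0, 1] such that ∑_{t∈G} g(t)(x) = 1 for every x ∈ X and ∫_X ω(x) ∑_{t∈G} |g(s⁻¹t)(s⁻¹·x) − g(t)(x)| dν(x) < ε for every ω ∈ A and s ∈ F. Suppose μ is a finite G-quasi-invariant Radon measure on X, and (μ_λ) is a net of finite G-quasi-invariant Radon measures on X with sup_λ μ_λ(X) < ∞ such that each μ_λ satisfies the approximate invariance condition and sup{|∫_X f dμ_λ − ∫_X f dμ|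 : f ∈ C(X, ℝ), ‖f‖_∞ ≤ 1} → 0. Then μ satisfies the approximate invariance condition. (This is the content of: a uniform limit of uniformly bounded Zimmer-amenable quasi-invariant measures is Zimmer-amenable, via the Reiter-type characterization.) -/
open MeasureTheory Filter Topology Pointwise

/-- The Reiter-type approximate invariance condition for a finite `G`-quasi-invariant Radon
measure `ν` on `X` (equivalent to Zimmer-amenability): for every `ε > 0`, finite `F ⊆ G` and
finite family `A` of bounded nonnegative Borel functions there is a finitely supported
partition of unity `g : G → (X → [0,1])` with
`∫ ω(x) ∑_t |g(s⁻¹t)(s⁻¹ • x) − g(t)(x)| dν < ε` for all `ω ∈ A`, `s ∈ F`. -/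
def ApproxInvCondition {X : Type*} [MeasurableSpace X]
    (G : Type*) [Group G] [MulAction G X] (ν : Measure X) : Prop :=
  ∀ ε > (0 : ℝ), ∀ F : Finset G, ∀ A : Finset (X → ℝ),
    (∀ w ∈ A, Measurable w ∧ (∀ x, 0 ≤ w x) ∧ ∃ C : ℝ, ∀ x, w x ≤ C) →
    ∃ (g : G → X → ℝ) (S : Finset G),
      (∀ t ∉ S, g t = 0) ∧
      (∀ t, Measurable (g t)) ∧
      (∀ t x, g t x ∈ Set.Icc (0 : ℝ) 1) ∧
      (∀ x, ∑' t : G, g t x = 1) ∧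
      ∀ w ∈ A, ∀ s ∈ F,
        ∫ x, w x * (∑' t : G, |g (s⁻¹ * t) (s⁻¹ • x) - g t x|) ∂ν < ε

/-!
Choose `λ` such that `μ_λ` is `δ`-close to `μ` against continuous functions of sup norm `≤ 1`,
and keep the partition of unity `g` that works for `μ_λ`. For `ω ∈ A` and `s ∈ F`, the Reiter
integrand `ω(x) ∑_t |g(s⁻¹t)(s⁻¹x) − g(t)(x)|` is a Borel function bounded by `2 sup ω`. As
`μ + μ_λ` is regular, this function is `L¹(μ + μ_λ)`-close to continuous functions, which may be
clamped to the same bound; hence its integrals against `μ` and `μ_λ` differ by at most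
`2 δ sup ω`.
-/

lemma exists_pos_forall_le_of_forall_exists_le {α : Type*} (A : Finset (α → ℝ))
    (hA : ∀ w ∈ A, ∃ C, ∀ x, w x ≤ C) : ∃ M, 0 < M ∧ ∀ w ∈ A, ∀ x, w x ≤ M := by
  have hbdd : BddAbove (⋃ w ∈ (A : Set (α → ℝ)), Set.range w) :=
    A.finite_toSet.bddAbove_biUnion.2 fun w hw ↦ by
      obtain ⟨C, hC⟩ := hA w hw
      exact ⟨C, Set.forall_mem_range.2 hC⟩
  obtain ⟨M, hM₁, hM⟩ := hbdd.exists_ge 1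
  exact ⟨M, one_pos.trans_le hM₁, fun w hw x ↦ hM _ (Set.mem_biUnion hw ⟨x, rfl⟩)⟩

lemma tsum_abs_sub_le_add {ι : Type*} {f₁ f₂ : ι → ℝ} {a b : ℝ} (h₁ : ∀ t, 0 ≤ f₁ t)
    (h₂ : ∀ t, 0 ≤ f₂ t) (hf₁ : HasSum f₁ a) (hf₂ : HasSum f₂ b) :
    ∑' t, |f₁ t - f₂ t| ≤ a + b := by
  have hle : ∀ t, |f₁ t - f₂ t| ≤ f₁ t + f₂ t := fun t ↦
    abs_sub_le_iff.2 ⟨by linarith [h₂ t], by linarith [h₁ t]⟩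
  have hsum := hf₁.add hf₂
  exact hasSum_le hle (hsum.summable.of_nonneg_of_le (fun t ↦ abs_nonneg _) hle).hasSum hsum

lemma abs_sub_max_min_le {a b C : ℝ} (ha : |a| ≤ C) : |a - max (-C) (min b C)| ≤ |a - b| := by
  rw [abs_le] at ha
  refine abs_le.2 ⟨?_, ?_⟩ <;>
    rcases max_cases (-C) (min b C) with ⟨h, h₂⟩ | ⟨h, h₂⟩ <;>
    rcases min_cases b C with ⟨h', h'₂⟩ | ⟨h', h'₂⟩ <;>
    linarith [le_abs_self (a - b), neg_abs_le (a - b)]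

section ContinuousDual

variable {X : Type*} [TopologicalSpace X] [CompactSpace X] [MeasurableSpace X]
  {ν₁ ν₂ : Measure X}

lemma abs_integral_sub_le_mul_norm {δ : ℝ}
    (hδ : ∀ f : C(X, ℝ), ‖f‖ ≤ 1 → |∫ x, f x ∂ν₁ - ∫ x, f x ∂ν₂| ≤ δ) (f : C(X, ℝ)) :
    |∫ x, f x ∂ν₁ - ∫ x, f x ∂ν₂| ≤ δ * ‖f‖ := by
  rcases eq_or_ne f 0 with rfl | hf
  · simp
  have hnf : 0 < ‖f‖ := norm_pos_iff.2 hf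
  have := hδ (‖f‖⁻¹ • f) (by rw [norm_smul, norm_inv, norm_norm, inv_mul_cancel₀ hnf.ne'])
  simp only [ContinuousMap.smul_apply, smul_eq_mul, integral_const_mul, ← mul_sub, abs_mul,
    abs_inv, abs_norm] at this
  rwa [inv_mul_le_iff₀ hnf, mul_comm] at this

lemma abs_integral_sub_le_of_forall_norm_le_one [NormalSpace X] [BorelSpace X]
    [IsFiniteMeasure ν₁] [IsFiniteMeasure ν₂] [(ν₁ + ν₂).WeaklyRegular] {δ C : ℝ}
    (hδ : ∀ f : C(X, ℝ), ‖f‖ ≤ 1 → |∫ x, f x ∂ν₁ - ∫ x, f x ∂ν₂| ≤ δ)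
    {h : X → ℝ} (hm : Measurable h) (hC₀ : 0 ≤ C) (hC : ∀ x, |h x| ≤ C) :
    |∫ x, h x ∂ν₁ - ∫ x, h x ∂ν₂| ≤ δ * C := by
  have hδ₀ : 0 ≤ δ := by simpa using hδ 0 (by simp)
  have hint : ∀ (ν : Measure X) [IsFiniteMeasure ν], Integrable h ν := fun ν _ ↦
    .of_bound hm.aestronglyMeasurable C (ae_of_all _ hC)
  refine le_of_forall_pos_le_add fun θ hθ ↦ ?_
  obtain ⟨f, hf, -⟩ := (hint (ν₁ + ν₂)).exists_boundedContinuous_integral_sub_le hθ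
  let f₀ : C(X, ℝ) := ⟨fun x ↦ max (-C) (min (f x) C), by fun_prop⟩
  have hf₀C : ‖f₀‖ ≤ C := (ContinuousMap.norm_le _ hC₀).2 fun x ↦
    abs_le.2 ⟨le_max_left _ _, max_le (by linarith) (min_le_right _ _)⟩
  have hint₀ : ∀ (ν : Measure X) [IsFiniteMeasure ν], Integrable f₀ ν := fun ν _ ↦
    .of_bound f₀.continuous.aestronglyMeasurable C (ae_of_all _ fun x ↦
      (ContinuousMap.norm_coe_le_norm f₀ x).trans hf₀C)
  have hclose : ∀ (ν : Measure X) [IsFiniteMeasure ν],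
      |∫ x, h x ∂ν - ∫ x, f₀ x ∂ν| ≤ ∫ x, |h x - f₀ x| ∂ν := fun ν _ ↦ by
    rw [← integral_sub (hint ν) (hint₀ ν)]
    exact abs_integral_le_integral_abs
  have hint_sub : ∀ (ν : Measure X) [IsFiniteMeasure ν], Integrable (fun x ↦ |h x - f₀ x|) ν :=
    fun ν _ ↦ ((hint ν).sub (hint₀ ν)).abs
  have hf₀ : ∫ x, |h x - f₀ x| ∂(ν₁ + ν₂) ≤ θ :=
    (integral_mono (hint_sub _) ((hint _).sub (f.integrable _)).norm
      fun x ↦ abs_sub_max_min_le (hC x)).trans hf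
  rw [integral_add_measure (hint_sub ν₁) (hint_sub ν₂)] at hf₀
  have e₁ := abs_le.1 (hclose ν₁)
  have e₂ := abs_le.1 (hclose ν₂)
  have e₃ := abs_le.1 (abs_integral_sub_le_mul_norm hδ f₀)
  have e₄ := mul_le_mul_of_nonneg_left hf₀C hδ₀
  exact abs_le.2 ⟨by linarith, by linarith⟩

end ContinuousDual

section Reiter

variable {X G : Type*} [Group G] [MulAction G X] {g : G → X → ℝ} {S : Finset G}

lemma measurable_tsum_abs_translate_sub [MeasurableSpace X] [MeasurableConstSMul G X]
    (hS : ∀ t ∉ S, g t = 0) (hg : ∀ t, Measurable (g t)) (s : G) :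
    Measurable fun x ↦ ∑' t, |g (s⁻¹ * t) (s⁻¹ • x) - g t x| := by
  classical
  have hsupp : ∀ t ∉ S ∪ s • S, ∀ x, |g (s⁻¹ * t) (s⁻¹ • x) - g t x| = 0 := by
    intro t ht x
    rw [Finset.mem_union, not_or] at ht
    have hst : s⁻¹ * t ∉ S := fun h ↦
      ht.2 (by simpa using Finset.smul_mem_smul_finset (a := s) h)
    simp [hS t ht.1, hS _ hst]
  have heq : (fun x ↦ ∑' t, |g (s⁻¹ * t) (s⁻¹ • x) - g t x|) =
      fun x ↦ ∑ t ∈ S ∪ s • S, |g (s⁻¹ * t) (s⁻¹ • x) - g t x| :=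
    funext fun x ↦ tsum_eq_sum fun t ht ↦ hsupp t ht x
  rw [heq]
  exact Finset.measurable_sum _ fun t _ ↦
    (((hg _).comp (measurable_const_smul _)).sub (hg t)).abs

lemma tsum_abs_translate_sub_le_two (hS : ∀ t ∉ S, g t = 0) (hg₀ : ∀ t x, 0 ≤ g t x)
    (hg₁ : ∀ x, ∑' t, g t x = 1) (s : G) (x : X) :
    ∑' t, |g (s⁻¹ * t) (s⁻¹ • x) - g t x| ≤ 2 := by
  have hsum : ∀ y, HasSum (fun t ↦ g t y) 1 := fun y ↦
    hg₁ y ▸ (summable_of_ne_finset_zero (s := S) fun t ht ↦ by rw [hS t ht]; rfl).hasSum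
  have hshift : HasSum (fun t ↦ g (s⁻¹ * t) (s⁻¹ • x)) 1 :=
    (Equiv.mulLeft s⁻¹).hasSum_iff.2 (hsum _)
  linarith [tsum_abs_sub_le_add (fun t ↦ hg₀ _ _) (fun t ↦ hg₀ _ _) hshift (hsum x)]

end Reiter

theorem stmt8_general {X : Type*} [TopologicalSpace X] [CompactSpace X] [T2Space X]
    [MeasurableSpace X] [BorelSpace X]
    {G : Type*} [Group G] [MulAction G X] [ContinuousConstSMul G X]
    (μ : Measure X) [IsFiniteMeasure μ] (hreg : μ.Regular)
    {ι : Type*} (l : Filter ι) [l.NeBot] (μs : ι → Measure X)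
    (hfin : ∀ i, IsFiniteMeasure (μs i)) (hregs : ∀ i, (μs i).Regular)
    (hAI : ∀ i, ApproxInvCondition G (μs i))
    (hconv : ∀ ε > (0 : ℝ), ∀ᶠ i in l, ∀ f : C(X, ℝ), ‖f‖ ≤ 1 →
      |∫ x, f x ∂(μs i) - ∫ x, f x ∂μ| < ε) :
    ApproxInvCondition G μ := by
  intro ε hε F A hA
  obtain ⟨M, hM, hMA⟩ :=
    exists_pos_forall_le_of_forall_exists_le A fun w hw ↦ (hA w hw).2.2
  obtain ⟨i, hi⟩ := (hconv (ε / (4 * M)) (by positivity)).exists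
  have := hfin i
  have := hregs i
  obtain ⟨g, S, hS, hgm, hg01, hg1, hgε⟩ := hAI i (ε / 2) (by positivity) F A hA
  refine ⟨g, S, hS, hgm, hg01, hg1, fun w hw s hs ↦ ?_⟩
  obtain ⟨hwm, hw₀, -⟩ := hA w hw
  have hsum_le_two := tsum_abs_translate_sub_le_two hS (fun t x ↦ (hg01 t x).1) hg1 s
  have hbound : ∀ x, |w x * (∑' t, |g (s⁻¹ * t) (s⁻¹ • x) - g t x|)| ≤ M * 2 := fun x ↦ by
    rw [abs_mul, abs_of_nonneg (hw₀ x), abs_of_nonneg (tsum_nonneg fun _ ↦ abs_nonneg _)]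
    exact mul_le_mul (hMA w hw x) (hsum_le_two x) (tsum_nonneg fun _ ↦ abs_nonneg _) hM.le
  have hmeas : Measurable fun x ↦ w x * ∑' t, |g (s⁻¹ * t) (s⁻¹ • x) - g t x| :=
    hwm.mul (measurable_tsum_abs_translate_sub hS hgm s)
  have hclose := abs_integral_sub_le_of_forall_norm_le_one (fun f hf ↦ (hi f hf).le) hmeas
    (by positivity) hbound
  have hδM : ε / (4 * M) * (M * 2) = ε / 2 := by field_simp; ring
  linarith [(abs_le.1 hclose).1, hgε w hw s hs]

/-- A finite `G`-quasi-invariant Radon measure which is the uniform limit of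
a uniformly bounded net of `G`-quasi-invariant Radon measures, each satisfying the
approximate invariance (Zimmer-amenability) condition, itself satisfies the approximate
invariance condition. -/
theorem stmt8 {X : Type*} [TopologicalSpace X] [CompactSpace X] [T2Space X]
    [MeasurableSpace X] [BorelSpace X]
    {G : Type*} [Group G] [Countable G] [MulAction G X] [ContinuousConstSMul G X]
    (μ : Measure X) [IsFiniteMeasure μ] (hreg : μ.Regular)
    (hqi : ∀ (g : G) (E : Set X), MeasurableSet E → μ E = 0 → μ (g • E) = 0)
    {ι : Type*} (l : Filter ι) [l.NeBot] (μs : ι → Measure X)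
    (hfin : ∀ i, IsFiniteMeasure (μs i)) (hregs : ∀ i, (μs i).Regular)
    (hqis : ∀ i, ∀ (g : G) (E : Set X), MeasurableSet E → μs i E = 0 → μs i (g • E) = 0)
    (hbdd : ∃ C : ENNReal, C ≠ ⊤ ∧ ∀ i, μs i Set.univ ≤ C)
    (hAI : ∀ i, ApproxInvCondition G (μs i))
    (hconv : ∀ ε > (0 : ℝ), ∀ᶠ i in l, ∀ f : C(X, ℝ), ‖f‖ ≤ 1 →
      |∫ x, f x ∂(μs i) - ∫ x, f x ∂μ| < ε) :
    ApproxInvCondition G μ :=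
  stmt8_general μ hreg l μs hfin hregs hAI hconv
end

section
/- Let G be a countable discrete group, let (F_k)_{k≥1} be an increasing sequence of finite symmetric subsets of G with e ∈ F_1 and ∪_k F_k = G, and let 𝔛 be a countable G-set. Denote by P(G) ⊆ ℓ¹(G) the set of probability densities on G, with (g·m)(t) = m(g⁻¹t). Suppose that for every k ≥ 1 there are a map μ^{(k)} : 𝔛 → P(G) and a finite subset C_k ⊆ 𝔛 such that C_k ⊆ C_{k+1}, F_k·C_k ⊆ C_{k+1}, ∪_k C_k = 𝔛, and ‖g·μ^{(k)}(x) − μ^{(k)}(g·x)‖₁ < 1/k² for all g ∈ F_k and all x ∉ C_k. Then there exists a map μ : 𝔛 → P(G) such that for every g ∈ G and every ε > 0 the set {x ∈ 𝔛 : ‖g·μ(x) − μ(g·x)‖₁ ≥ ε} is finite, i.e., ‖g·μ(x) − μ(g·x)‖₁ → 0 as x → ∞ in 𝔛. -/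
open Filter Topology

set_option maxHeartbeats 2000000 in
/-- Gluing approximately equivariant maps: given an exhaustion `(F_k)` of a
countable group `G` by finite symmetric sets with `e ∈ F_1`, maps `μ⁽ᵏ⁾ : 𝔛 → P(G)` and
finite sets `C_k ⊆ 𝔛` with `C_k ⊆ C_{k+1}`, `F_k • C_k ⊆ C_{k+1}`, `⋃ C_k = 𝔛` and
`‖g • μ⁽ᵏ⁾(x) − μ⁽ᵏ⁾(g • x)‖₁ < 1/k²` for `g ∈ F_k`, `x ∉ C_k`, there is a map
`μ : 𝔛 → P(G)` with `‖g • μ(x) − μ(g • x)‖₁ → 0` as `x → ∞` in `𝔛`. -/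
theorem stmt10 {G : Type*} [Group G] [Countable G]
    {𝔛 : Type*} [Countable 𝔛] [MulAction G 𝔛]
    (F : ℕ → Finset G) (hFmono : ∀ k, F k ⊆ F (k + 1))
    (hFsymm : ∀ k, ∀ g ∈ F k, g⁻¹ ∈ F k) (hFe : (1 : G) ∈ F 1)
    (hFunion : ∀ g : G, ∃ k, 1 ≤ k ∧ g ∈ F k)
    (μs : ℕ → 𝔛 → G → ℝ) (C : ℕ → Finset 𝔛)
    (hprob : ∀ k x, (∀ t, 0 ≤ μs k x t) ∧ ∑' t : G, μs k x t = 1)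
    (hCmono : ∀ k, C k ⊆ C (k + 1))
    (hFC : ∀ k, ∀ g ∈ F k, ∀ x ∈ C k, g • x ∈ C (k + 1))
    (hCunion : ∀ x : 𝔛, ∃ k, x ∈ C k)
    (happrox : ∀ k, 1 ≤ k → ∀ g ∈ F k, ∀ x : 𝔛, x ∉ C k →
      ∑' t : G, |μs k x (g⁻¹ * t) - μs k (g • x) t| < 1 / (k : ℝ) ^ 2) :
    ∃ μ : 𝔛 → G → ℝ,
      (∀ x, (∀ t, 0 ≤ μ x t) ∧ ∑' t : G, μ x t = 1) ∧
      ∀ g : G, ∀ ε > (0 : ℝ),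
        {x : 𝔛 | ε ≤ ∑' t : G, |μ x (g⁻¹ * t) - μ (g • x) t|}.Finite := by
  classical
  have hnn : ∀ k (x : 𝔛) t, 0 ≤ μs k x t := fun k x => (hprob k x).1
  have htsum : ∀ k (x : 𝔛), ∑' t, μs k x t = 1 := fun k x => (hprob k x).2
  have hsum : ∀ k (x : 𝔛), Summable (μs k x) := by
    intro k x
    by_contra h
    have h1 := htsum k x
    rw [tsum_eq_zero_of_not_summable h] at h1
    norm_num at h1
  have hsumA : ∀ k (x : 𝔛) (g : G), Summable (fun t => μs k x (g⁻¹ * t)) := by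
    intro k x g
    exact ((Equiv.mulLeft g⁻¹).summable_iff).2 (hsum k x)
  have htsumA : ∀ k (x : 𝔛) (g : G), ∑' t, μs k x (g⁻¹ * t) = 1 := by
    intro k x g
    rw [← htsum k x]
    exact (Equiv.mulLeft g⁻¹).tsum_eq (μs k x)
  have hF : Monotone F := monotone_nat_of_le_succ hFmono
  have hC : Monotone C := monotone_nat_of_le_succ hCmono
  obtain ⟨ℓ, hℓmem, hℓmin, hℓle⟩ : ∃ ℓ : 𝔛 → ℕ, (∀ x, x ∈ C (ℓ x)) ∧
      (∀ x k, k < ℓ x → x ∉ C k) ∧ (∀ (x : 𝔛) k, x ∈ C k → ℓ x ≤ k) :=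
    ⟨fun x => Nat.find (hCunion x), fun x => Nat.find_spec (hCunion x),
      fun x k hk => Nat.find_min (hCunion x) hk, fun x k hk => Nat.find_le hk⟩
  set L : 𝔛 → ℕ := fun x => max (ℓ x) 1 with hLdef
  have hL1 : ∀ x, 1 ≤ L x := fun x => le_max_right _ _
  set μ : 𝔛 → G → ℝ := fun x t => ((L x : ℝ))⁻¹ * ∑ k ∈ Finset.Ioc 0 (L x), μs k x t
    with hμdef
  have hμsum : ∀ x, Summable (μ x) := by
    intro x
    simp only [hμdef]
    exact (summable_sum (fun k _ => hsum k x)).mul_left _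
  refine ⟨μ, ?_, ?_⟩
  · intro x
    constructor
    · intro t
      simp only [hμdef]
      have h1 : (0:ℝ) ≤ ∑ k ∈ Finset.Ioc 0 (L x), μs k x t :=
        Finset.sum_nonneg fun k _ => hnn k x t
      positivity
    · simp only [hμdef]
      rw [tsum_mul_left, Summable.tsum_finsetSum (fun k _ => hsum k x)]
      have h2 : ∑ k ∈ Finset.Ioc 0 (L x), ∑' t, μs k x t = (L x : ℝ) := by
        simp [htsum, Nat.card_Ioc]
      rw [h2, inv_mul_cancel₀]
      have := hL1 x
      exact Nat.cast_ne_zero.2 (by omega)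
  · intro g ε hε
    obtain ⟨k₀, hk₀1, hgk₀⟩ := hFunion g
    obtain ⟨K, hKgt⟩ := exists_nat_gt (5 / ε)
    set k₁ := max k₀ (max K 1) with hk₁def
    have hk₁1 : 1 ≤ k₁ := le_trans (le_max_right K 1) (le_max_right _ _)
    have hgk₁ : g ∈ F k₁ := hF (le_max_left _ _) hgk₀
    have hk₁R : (1:ℝ) ≤ (k₁:ℝ) := by exact_mod_cast hk₁1
    have hKk₁ : (K:ℝ) ≤ (k₁:ℝ) := by
      exact_mod_cast le_trans (le_max_left K 1) (le_max_right k₀ _)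
    have hk₁inv : 1 / (k₁:ℝ)^2 < ε / 5 := by
      rw [div_lt_div_iff₀ (by positivity) (by norm_num : (0:ℝ) < 5)]
      have h5 : 5 < (K:ℝ) * ε := (div_lt_iff₀ hε).1 hKgt
      have hKk2 : (K:ℝ) ≤ (k₁:ℝ)^2 := by nlinarith
      nlinarith [mul_le_mul_of_nonneg_right hKk2 hε.le]
    obtain ⟨N₀, hN₀⟩ := exists_nat_gt (max ((5 * (2 * (k₁:ℝ) + 2)) / ε) (15 / ε))
    set N := max N₀ (k₁ + 1) with hNdef
    have hNk₁ : k₁ + 1 ≤ N := le_max_right _ _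
    have hN₀N : (N₀ : ℝ) ≤ N := by exact_mod_cast le_max_left _ _
    have hNa : 5 * (2 * (k₁:ℝ) + 2) < (N:ℝ) * ε := by
      have := (le_max_left ((5 * (2 * (k₁:ℝ) + 2)) / ε) (15 / ε)).trans_lt hN₀
      have h1 : (5 * (2 * (k₁:ℝ) + 2)) / ε < N := this.trans_le hN₀N
      exact (div_lt_iff₀ hε).1 h1
    have hNb : 15 < (N:ℝ) * ε := by
      have := (le_max_right ((5 * (2 * (k₁:ℝ) + 2)) / ε) (15 / ε)).trans_lt hN₀
      exact (div_lt_iff₀ hε).1 (this.trans_le hN₀N)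
    have hN0 : (0:ℝ) < N := by
      have : (1:ℝ) ≤ N := by exact_mod_cast le_trans (by omega) hNk₁
      linarith
    -- main estimate
    have main : ∀ x : 𝔛, x ∉ C N → ∑' t, |μ x (g⁻¹ * t) - μ (g • x) t| < ε := by
      intro x hxN
      have hnN : N < ℓ x := by
        by_contra h
        push_neg at h
        exact hxN (hC h (hℓmem x))
      set n := L x with hn
      have hnℓ : n = ℓ x := max_eq_left (by omega)
      have hxmem : x ∈ C n := by rw [hnℓ]; exact hℓmem x
      have hxk : ∀ k < n, x ∉ C k := by
        intro k hk
        exact hℓmin x k (by omega)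
      have hgFn : ∀ k, k₁ ≤ k → g ∈ F k := fun k hk => hF hk hgk₁
      have hgFn' : ∀ k, k₁ ≤ k → g⁻¹ ∈ F k := fun k hk => hFsymm k g (hgFn k hk)
      have hnbig : N + 1 ≤ n := by omega
      have hmub : ℓ (g • x) ≤ n + 1 := hℓle _ _ (hFC n g (hgFn n (by omega)) x hxmem)
      have hmlb : n ≤ ℓ (g • x) + 1 := by
        have h1 : x ∈ C (max (ℓ (g • x)) k₁ + 1) := by
          have h2 := hFC (max (ℓ (g • x)) k₁) g⁻¹ (hgFn' _ (le_max_right _ _)) (g • x)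
            (hC (le_max_left _ _) (hℓmem (g • x)))
          rwa [inv_smul_smul] at h2
        have h2 : ℓ x ≤ max (ℓ (g • x)) k₁ + 1 := hℓle _ _ h1
        omega
      set m := L (g • x) with hm
      have hmℓ : m = ℓ (g • x) := max_eq_left (by omega)
      have hmub' : m ≤ n + 1 := by omega
      have hmlb' : n ≤ m + 1 := by omega
      have hmN : N ≤ m := by omega
      set p := min n m with hp
      have hpn : p ≤ n := min_le_left _ _
      have hpm : p ≤ m := min_le_right _ _
      -- summability of the summand families
      have hAs : ∀ k, Summable (fun t => μs k x (g⁻¹ * t)) := fun k => hsumA k x g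
      have hBs : ∀ k, Summable (fun t => μs k (g • x) t) := fun k => hsum k (g • x)
      have habs_le : ∀ k (t : G), |μs k x (g⁻¹ * t) - μs k (g • x) t| ≤
          μs k x (g⁻¹ * t) + μs k (g • x) t := by
        intro k t
        calc |μs k x (g⁻¹ * t) - μs k (g • x) t|
            ≤ |μs k x (g⁻¹ * t)| + |μs k (g • x) t| := abs_sub _ _
          _ = μs k x (g⁻¹ * t) + μs k (g • x) t := by
              rw [abs_of_nonneg (hnn _ _ _), abs_of_nonneg (hnn _ _ _)]
      have hdsum : ∀ k, Summable (fun t => |μs k x (g⁻¹ * t) - μs k (g • x) t|) := by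
        intro k
        exact Summable.of_nonneg_of_le (fun t => abs_nonneg _) (habs_le k)
          ((hAs k).add (hBs k))
      have hd2 : ∀ k, ∑' t, |μs k x (g⁻¹ * t) - μs k (g • x) t| ≤ 2 := by
        intro k
        calc ∑' t, |μs k x (g⁻¹ * t) - μs k (g • x) t|
            ≤ ∑' t, (μs k x (g⁻¹ * t) + μs k (g • x) t) :=
              Summable.tsum_le_tsum (habs_le k) (hdsum k) ((hAs k).add (hBs k))
          _ = 1 + 1 := by rw [Summable.tsum_add (hAs k) (hBs k), htsumA, htsum]
          _ = 2 := by norm_num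
      have hdgood : ∀ k, k₁ ≤ k → k < n →
          ∑' t, |μs k x (g⁻¹ * t) - μs k (g • x) t| ≤ 1 / (k₁:ℝ)^2 := by
        intro k hk hkn
        have h1 := happrox k (le_trans hk₁1 hk) g (hgFn k hk) x (hxk k hkn)
        refine h1.le.trans ?_
        have hkR : (k₁:ℝ) ≤ (k:ℝ) := by exact_mod_cast hk
        apply one_div_le_one_div_of_le (by positivity)
        nlinarith
      -- pointwise decomposition
      have key : ∀ t : G, μ x (g⁻¹ * t) - μ (g • x) t =
          (n:ℝ)⁻¹ * ∑ k ∈ Finset.Ioc 0 p, (μs k x (g⁻¹ * t) - μs k (g • x) t)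
          + (n:ℝ)⁻¹ * ∑ k ∈ Finset.Ioc p n, μs k x (g⁻¹ * t)
          + ((n:ℝ)⁻¹ - (m:ℝ)⁻¹) * ∑ k ∈ Finset.Ioc 0 p, μs k (g • x) t
          + (-(m:ℝ)⁻¹) * ∑ k ∈ Finset.Ioc p m, μs k (g • x) t := by
        intro t
        simp only [hμdef, ← hn, ← hm]
        rw [← Finset.sum_Ioc_consecutive (fun k => μs k x (g⁻¹ * t)) (Nat.zero_le p) hpn,
          ← Finset.sum_Ioc_consecutive (fun k => μs k (g • x) t) (Nat.zero_le p) hpm,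
          Finset.sum_sub_distrib]
        ring
      have hBnn : ∀ (s : Finset ℕ) (t : G), (0:ℝ) ≤ ∑ k ∈ s, μs k (g • x) t :=
        fun s t => Finset.sum_nonneg fun k _ => hnn _ _ _
      have hAnn : ∀ (s : Finset ℕ) (t : G), (0:ℝ) ≤ ∑ k ∈ s, μs k x (g⁻¹ * t) :=
        fun s t => Finset.sum_nonneg fun k _ => hnn _ _ _
      have hn0 : (0:ℝ) < (n:ℝ) := by
        have : (1:ℕ) ≤ n := hL1 x
        exact_mod_cast Nat.pos_of_ne_zero (by omega)
      have hm0 : (0:ℝ) < (m:ℝ) := by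
        have : (1:ℕ) ≤ m := hL1 (g • x)
        exact_mod_cast Nat.pos_of_ne_zero (by omega)
      have habs : ∀ t : G, |μ x (g⁻¹ * t) - μ (g • x) t| ≤
          (n:ℝ)⁻¹ * ∑ k ∈ Finset.Ioc 0 p, |μs k x (g⁻¹ * t) - μs k (g • x) t|
          + (n:ℝ)⁻¹ * ∑ k ∈ Finset.Ioc p n, μs k x (g⁻¹ * t)
          + |(n:ℝ)⁻¹ - (m:ℝ)⁻¹| * ∑ k ∈ Finset.Ioc 0 p, μs k (g • x) t
          + (m:ℝ)⁻¹ * ∑ k ∈ Finset.Ioc p m, μs k (g • x) t := by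
        intro t
        rw [key t]
        have e1 : |(n:ℝ)⁻¹ * ∑ k ∈ Finset.Ioc 0 p, (μs k x (g⁻¹ * t) - μs k (g • x) t)|
            ≤ (n:ℝ)⁻¹ * ∑ k ∈ Finset.Ioc 0 p, |μs k x (g⁻¹ * t) - μs k (g • x) t| := by
          rw [abs_mul, abs_of_nonneg (by positivity : (0:ℝ) ≤ (n:ℝ)⁻¹)]
          exact mul_le_mul_of_nonneg_left (Finset.abs_sum_le_sum_abs _ _) (by positivity)
        have e2 : |(n:ℝ)⁻¹ * ∑ k ∈ Finset.Ioc p n, μs k x (g⁻¹ * t)|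
            = (n:ℝ)⁻¹ * ∑ k ∈ Finset.Ioc p n, μs k x (g⁻¹ * t) :=
          abs_of_nonneg (mul_nonneg (by positivity) (hAnn _ t))
        have e3 : |((n:ℝ)⁻¹ - (m:ℝ)⁻¹) * ∑ k ∈ Finset.Ioc 0 p, μs k (g • x) t|
            = |(n:ℝ)⁻¹ - (m:ℝ)⁻¹| * ∑ k ∈ Finset.Ioc 0 p, μs k (g • x) t := by
          rw [abs_mul, abs_of_nonneg (hBnn _ t)]
        have e4 : |(-(m:ℝ)⁻¹) * ∑ k ∈ Finset.Ioc p m, μs k (g • x) t|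
            = (m:ℝ)⁻¹ * ∑ k ∈ Finset.Ioc p m, μs k (g • x) t := by
          rw [abs_mul, abs_neg, abs_of_nonneg (by positivity : (0:ℝ) ≤ (m:ℝ)⁻¹),
            abs_of_nonneg (hBnn _ t)]
        calc |(n:ℝ)⁻¹ * ∑ k ∈ Finset.Ioc 0 p, (μs k x (g⁻¹ * t) - μs k (g • x) t)
              + (n:ℝ)⁻¹ * ∑ k ∈ Finset.Ioc p n, μs k x (g⁻¹ * t)
              + ((n:ℝ)⁻¹ - (m:ℝ)⁻¹) * ∑ k ∈ Finset.Ioc 0 p, μs k (g • x) t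
              + (-(m:ℝ)⁻¹) * ∑ k ∈ Finset.Ioc p m, μs k (g • x) t|
            ≤ |(n:ℝ)⁻¹ * ∑ k ∈ Finset.Ioc 0 p, (μs k x (g⁻¹ * t) - μs k (g • x) t)|
              + |(n:ℝ)⁻¹ * ∑ k ∈ Finset.Ioc p n, μs k x (g⁻¹ * t)|
              + |((n:ℝ)⁻¹ - (m:ℝ)⁻¹) * ∑ k ∈ Finset.Ioc 0 p, μs k (g • x) t|
              + |(-(m:ℝ)⁻¹) * ∑ k ∈ Finset.Ioc p m, μs k (g • x) t| := by
              exact le_trans (abs_add_le _ _) (by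
                gcongr
                exact le_trans (abs_add_le _ _) (by gcongr; exact abs_add_le _ _))
          _ ≤ _ := by rw [e2, e3, e4]; gcongr
      -- summability of the majorant
      have hS1 : Summable (fun t : G =>
          ∑ k ∈ Finset.Ioc 0 p, |μs k x (g⁻¹ * t) - μs k (g • x) t|) :=
        summable_sum (fun k _ => hdsum k)
      have hS2 : Summable (fun t : G => ∑ k ∈ Finset.Ioc p n, μs k x (g⁻¹ * t)) :=
        summable_sum (fun k _ => hAs k)
      have hS3 : Summable (fun t : G => ∑ k ∈ Finset.Ioc 0 p, μs k (g • x) t) :=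
        summable_sum (fun k _ => hBs k)
      have hS4 : Summable (fun t : G => ∑ k ∈ Finset.Ioc p m, μs k (g • x) t) :=
        summable_sum (fun k _ => hBs k)
      have hSmaj : Summable (fun t : G =>
          (n:ℝ)⁻¹ * ∑ k ∈ Finset.Ioc 0 p, |μs k x (g⁻¹ * t) - μs k (g • x) t|
          + (n:ℝ)⁻¹ * ∑ k ∈ Finset.Ioc p n, μs k x (g⁻¹ * t)
          + |(n:ℝ)⁻¹ - (m:ℝ)⁻¹| * ∑ k ∈ Finset.Ioc 0 p, μs k (g • x) t
          + (m:ℝ)⁻¹ * ∑ k ∈ Finset.Ioc p m, μs k (g • x) t) :=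
        (((hS1.mul_left _).add (hS2.mul_left _)).add (hS3.mul_left _)).add (hS4.mul_left _)
      have hTsum : Summable (fun t : G => |μ x (g⁻¹ * t) - μ (g • x) t|) :=
        Summable.of_nonneg_of_le (fun t => abs_nonneg _) habs hSmaj
      -- tsum bound
      have hT : ∑' t, |μ x (g⁻¹ * t) - μ (g • x) t| ≤
          (n:ℝ)⁻¹ * ∑ k ∈ Finset.Ioc 0 p, (∑' t, |μs k x (g⁻¹ * t) - μs k (g • x) t|)
          + (n:ℝ)⁻¹ * ((Finset.Ioc p n).card : ℝ)
          + |(n:ℝ)⁻¹ - (m:ℝ)⁻¹| * ((Finset.Ioc 0 p).card : ℝ)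
          + (m:ℝ)⁻¹ * ((Finset.Ioc p m).card : ℝ) := by
        refine le_trans (Summable.tsum_le_tsum habs hTsum hSmaj) ?_
        rw [Summable.tsum_add (((hS1.mul_left _).add (hS2.mul_left _)).add (hS3.mul_left _))
          (hS4.mul_left _),
          Summable.tsum_add ((hS1.mul_left _).add (hS2.mul_left _)) (hS3.mul_left _),
          Summable.tsum_add (hS1.mul_left _) (hS2.mul_left _),
          tsum_mul_left, tsum_mul_left, tsum_mul_left, tsum_mul_left,
          Summable.tsum_finsetSum (fun k _ => hdsum k), Summable.tsum_finsetSum (fun k _ => hAs k),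
          Summable.tsum_finsetSum (fun k _ => hBs k), Summable.tsum_finsetSum (fun k _ => hBs k)]
        have c2 : ∑ k ∈ Finset.Ioc p n, ∑' t, μs k x (g⁻¹ * t)
            = ((Finset.Ioc p n).card : ℝ) := by
          simp [htsumA]
        have c3 : ∑ k ∈ Finset.Ioc 0 p, ∑' t, μs k (g • x) t
            = ((Finset.Ioc 0 p).card : ℝ) := by
          simp [htsum]
        have c4 : ∑ k ∈ Finset.Ioc p m, ∑' t, μs k (g • x) t
            = ((Finset.Ioc p m).card : ℝ) := by
          simp [htsum]
        rw [c2, c3, c4]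
      -- bound the sum of D k over Ioc 0 p
      set q := min k₁ p with hq
      have hqp : q ≤ p := min_le_right _ _
      have hsplit : ∑ k ∈ Finset.Ioc 0 p, (∑' t, |μs k x (g⁻¹ * t) - μs k (g • x) t|)
          = ∑ k ∈ Finset.Ioc 0 q, (∑' t, |μs k x (g⁻¹ * t) - μs k (g • x) t|)
          + ∑ k ∈ Finset.Ioc q p, (∑' t, |μs k x (g⁻¹ * t) - μs k (g • x) t|) :=
        (Finset.sum_Ioc_consecutive _ (Nat.zero_le q) hqp).symm
      have hb1 : ∑ k ∈ Finset.Ioc 0 q, (∑' t, |μs k x (g⁻¹ * t) - μs k (g • x) t|)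
          ≤ 2 * (k₁:ℝ) := by
        calc ∑ k ∈ Finset.Ioc 0 q, (∑' t, |μs k x (g⁻¹ * t) - μs k (g • x) t|)
            ≤ (Finset.Ioc 0 q).card • (2:ℝ) :=
              Finset.sum_le_card_nsmul _ _ _ (fun k _ => hd2 k)
          _ = (q:ℝ) * 2 := by simp [Nat.card_Ioc]
          _ ≤ (k₁:ℝ) * 2 := by
              have : (q:ℝ) ≤ (k₁:ℝ) := by exact_mod_cast min_le_left k₁ p
              linarith
          _ = 2 * (k₁:ℝ) := by ring
      have hb2 : ∑ k ∈ Finset.Ioc q p, (∑' t, |μs k x (g⁻¹ * t) - μs k (g • x) t|)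
          ≤ (p:ℝ) * (1 / (k₁:ℝ)^2) + 2 := by
        have step : ∀ k ∈ Finset.Ioc q p,
            (∑' t, |μs k x (g⁻¹ * t) - μs k (g • x) t|)
            ≤ 1 / (k₁:ℝ)^2 + (if k = n then (2:ℝ) else 0) := by
          intro k hk
          rcases Finset.mem_Ioc.1 hk with ⟨hk1, hk2⟩
          by_cases hkn : k < n
          · have hkk₁ : k₁ ≤ k := by omega
            have h1 := hdgood k hkk₁ hkn
            refine h1.trans (le_add_of_nonneg_right ?_)
            split <;> norm_num
          · have hkn' : k = n := by omega
            rw [if_pos hkn']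
            have := hd2 k
            have : (0:ℝ) ≤ 1 / (k₁:ℝ)^2 := by positivity
            linarith [hd2 k]
        calc ∑ k ∈ Finset.Ioc q p, (∑' t, |μs k x (g⁻¹ * t) - μs k (g • x) t|)
            ≤ ∑ k ∈ Finset.Ioc q p, (1 / (k₁:ℝ)^2 + if k = n then (2:ℝ) else 0) :=
              Finset.sum_le_sum step
          _ = ((Finset.Ioc q p).card : ℝ) * (1 / (k₁:ℝ)^2)
              + ∑ k ∈ Finset.Ioc q p, (if k = n then (2:ℝ) else 0) := by
              rw [Finset.sum_add_distrib, Finset.sum_const, nsmul_eq_mul]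
          _ ≤ (p:ℝ) * (1 / (k₁:ℝ)^2) + 2 := by
              have h1 : ((Finset.Ioc q p).card : ℝ) ≤ (p:ℝ) := by
                rw [Nat.card_Ioc]
                exact_mod_cast Nat.sub_le p q
              have h2 : ∑ k ∈ Finset.Ioc q p, (if k = n then (2:ℝ) else 0) ≤ 2 := by
                rw [Finset.sum_ite_eq' (Finset.Ioc q p) n (fun _ => (2:ℝ))]
                split <;> norm_num
              have h3 : (0:ℝ) ≤ 1 / (k₁:ℝ)^2 := by positivity
              nlinarith
      -- numeric facts
      have hcard2 : ((Finset.Ioc p n).card : ℝ) ≤ 1 := by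
        rw [Nat.card_Ioc]
        have : n - p ≤ 1 := by omega
        exact_mod_cast this
      have hcard4 : ((Finset.Ioc p m).card : ℝ) ≤ 1 := by
        rw [Nat.card_Ioc]
        have : m - p ≤ 1 := by omega
        exact_mod_cast this
      have hcard3 : ((Finset.Ioc 0 p).card : ℝ) = (p:ℝ) := by
        rw [Nat.card_Ioc]; norm_num
      have hnN' : (N:ℝ) ≤ (n:ℝ) := by exact_mod_cast (by omega : N ≤ n)
      have hmN' : (N:ℝ) ≤ (m:ℝ) := by exact_mod_cast hmN
      have hinvn : (n:ℝ)⁻¹ ≤ (N:ℝ)⁻¹ := by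
        apply inv_anti₀ hN0 hnN'
      have hinvm : (m:ℝ)⁻¹ ≤ (N:ℝ)⁻¹ := by
        apply inv_anti₀ hN0 hmN'
      -- term 3 bound
      have h3 : |(n:ℝ)⁻¹ - (m:ℝ)⁻¹| * (p:ℝ) ≤ (N:ℝ)⁻¹ := by
        have hsub : (n:ℝ)⁻¹ - (m:ℝ)⁻¹ = ((m:ℝ) - (n:ℝ)) / ((n:ℝ) * (m:ℝ)) := by
          field_simp
        rw [hsub, abs_div, abs_of_pos (by positivity : (0:ℝ) < (n:ℝ) * (m:ℝ))]
        have habs1 : |(m:ℝ) - (n:ℝ)| ≤ 1 := by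
          rw [abs_le]
          constructor
          · have : (n:ℝ) ≤ (m:ℝ) + 1 := by exact_mod_cast hmlb'
            linarith
          · have : (m:ℝ) ≤ (n:ℝ) + 1 := by exact_mod_cast hmub'
            linarith
        have hpm' : (p:ℝ) ≤ (m:ℝ) := by exact_mod_cast hpm
        calc |(m:ℝ) - (n:ℝ)| / ((n:ℝ) * (m:ℝ)) * (p:ℝ)
            ≤ 1 / ((n:ℝ) * (m:ℝ)) * (m:ℝ) := by
              apply mul_le_mul (by gcongr) hpm' (by positivity) (by positivity)
          _ = (n:ℝ)⁻¹ := by field_simp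
          _ ≤ (N:ℝ)⁻¹ := hinvn
      -- term 1 helper: n⁻¹ * p ≤ 1
      have hpn' : (p:ℝ) ≤ (n:ℝ) := by exact_mod_cast hpn
      have hinvnp : (n:ℝ)⁻¹ * (p:ℝ) ≤ 1 := by
        rw [inv_mul_le_iff₀ hn0]
        linarith
      -- final assembly
      have hεN1 : (N:ℝ)⁻¹ * (2 * (k₁:ℝ) + 2) < ε / 5 := by
        rw [inv_mul_eq_div, div_lt_div_iff₀ hN0 (by norm_num : (0:ℝ) < 5)]
        nlinarith
      have hεN2 : (N:ℝ)⁻¹ < ε / 15 := by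
        rw [inv_eq_one_div, div_lt_div_iff₀ hN0 (by norm_num : (0:ℝ) < 15)]
        nlinarith
      have hk₁0 : (0:ℝ) ≤ 1 / (k₁:ℝ)^2 := by positivity
      calc ∑' t, |μ x (g⁻¹ * t) - μ (g • x) t|
          ≤ (n:ℝ)⁻¹ * ∑ k ∈ Finset.Ioc 0 p, (∑' t, |μs k x (g⁻¹ * t) - μs k (g • x) t|)
            + (n:ℝ)⁻¹ * ((Finset.Ioc p n).card : ℝ)
            + |(n:ℝ)⁻¹ - (m:ℝ)⁻¹| * ((Finset.Ioc 0 p).card : ℝ)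
            + (m:ℝ)⁻¹ * ((Finset.Ioc p m).card : ℝ) := hT
        _ ≤ (n:ℝ)⁻¹ * (2 * (k₁:ℝ) + ((p:ℝ) * (1 / (k₁:ℝ)^2) + 2))
            + (n:ℝ)⁻¹ * 1 + (N:ℝ)⁻¹ + (m:ℝ)⁻¹ * 1 := by
            rw [hcard3]
            gcongr
            · rw [hsplit]; exact add_le_add hb1 hb2
        _ = (n:ℝ)⁻¹ * (2 * (k₁:ℝ) + 2) + ((n:ℝ)⁻¹ * (p:ℝ)) * (1 / (k₁:ℝ)^2)
            + (n:ℝ)⁻¹ + (N:ℝ)⁻¹ + (m:ℝ)⁻¹ := by ring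
        _ ≤ (N:ℝ)⁻¹ * (2 * (k₁:ℝ) + 2) + 1 * (1 / (k₁:ℝ)^2)
            + (N:ℝ)⁻¹ + (N:ℝ)⁻¹ + (N:ℝ)⁻¹ := by
            gcongr
        _ < ε / 5 + ε / 5 + ε / 15 + ε / 15 + ε / 15 := by
            have h1 : 1 * (1 / (k₁:ℝ)^2) < ε / 5 := by linarith
            linarith [hεN1, hεN2, h1]
        _ = 3 * ε / 5 := by ring
        _ < ε := by linarith
    apply Set.Finite.subset (C N).finite_toSet
    intro x hx
    simp only [Set.mem_setOf_eq] at hx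
    by_contra hxC
    have := main x (by simpa using hxC)
    linarith
end

section
/- Let 𝔛 be a countable set with an action of a countable discrete group G, fix an enumeration G = {s_i : i ∈ ℕ}, let ω be a free ultrafilter on ℕ, let (ξ̃_n) be a sequence of unit vectors in ℓ²(𝔛), and let (α_i) be strictly positive real numbers with ∑_{i,j} α_i α_j < ∞. Set ξ_n(y) = ∑_{i∈ℕ} α_i |ξ̃_n(s_i⁻¹·y)| for y ∈ 𝔛 (so ξ_n ∈ ℓ²(𝔛) with α_0 ≤ ‖ξ_n‖₂ ≤ ∑_i α_i), and define, for every sequence f = (f_n) of uniformly bounded functions f_n : 𝔛 → [0, ∞), Λ(f) = lim_{n→ω} (∑_{y∈𝔛} f_n(y) ξ_n(y)²) / ‖ξ_n‖₂². Then for every g ∈ G and every sequence (f^{(j)})_{j∈ℕ}, where f^{(j)} = (f^{(j)}_n)_n satisfies 0 ≤ f^{(j+1)}_n ≤ f^{(j)}_n ≤ 1 pointwise for all j, n: if inf_j Λ(f^{(j)}) = 0 then inf_j Λ((f^{(j)}_n ∘ g)_n) = 0, where (f ∘ g)(y) = f(g·y). (This expresses that every internal probability measure in Q̃P(𝔛)_ω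 is quasi-invariant.) -/
set_option maxHeartbeats 1000000

open Filter Topology

private lemma ulim_tendsto (ω : Ultrafilter ℕ) (x : ℕ → ℝ) {a b : ℝ}
    (h : ∀ n, x n ∈ Set.Icc a b) :
    Filter.Tendsto x (ω : Filter ℕ) (𝓝 (limUnder (ω : Filter ℕ) x)) := by
  obtain ⟨L, -, hle⟩ := (isCompact_Icc (a := a) (b := b)).ultrafilter_le_nhds (ω.map x)
    (by
      rw [Ultrafilter.coe_map, Filter.le_principal_iff, Filter.mem_map]
      exact Filter.univ_mem' h)
  have ht : Filter.Tendsto x (ω : Filter ℕ) (𝓝 L) := hle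
  rw [ht.limUnder_eq]
  exact ht

private lemma lemA {𝔛 : Type*} (β : ℕ → ℝ) (hβ0 : ∀ i, 0 ≤ β i) (hβ : Summable β)
    (w : ℕ → 𝔛 → ℝ) (hw0 : ∀ i y, 0 ≤ w i y) (hw1 : ∀ i y, w i y ≤ 1)
    (hw2 : ∀ i, HasSum (fun y => w i y ^ 2) 1) :
    Summable (fun y => (∑' i, β i * w i y) ^ 2) ∧
      ∑' y : 𝔛, (∑' i, β i * w i y) ^ 2 ≤ (∑' i, β i) ^ 2 := by
  set B := ∑' i, β i with hBdef
  have hB0 : 0 ≤ B := tsum_nonneg hβ0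
  have hsum_i : ∀ y, Summable fun i => β i * w i y := fun y =>
    Summable.of_nonneg_of_le (fun i => mul_nonneg (hβ0 i) (hw0 i y))
      (fun i => mul_le_of_le_one_right (hβ0 i) (hw1 i y)) hβ
  have hsq_i : ∀ y : 𝔛, Summable fun i => β i * w i y ^ 2 := fun y =>
    Summable.of_nonneg_of_le (fun i => mul_nonneg (hβ0 i) (sq_nonneg _))
      (fun i => mul_le_of_le_one_right (hβ0 i)
        (by nlinarith [hw0 i y, hw1 i y])) hβ
  have hcol : (fun i => ∑' y : 𝔛, β i * w i y ^ 2) = β := by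
    funext i
    rw [tsum_mul_left, (hw2 i).tsum_eq, mul_one]
  have hprod : Summable (fun p : ℕ × 𝔛 => β p.1 * w p.1 p.2 ^ 2) := by
    refine (summable_prod_of_nonneg (fun p => mul_nonneg (hβ0 p.1) (sq_nonneg _))).2
      ⟨fun i => ((hw2 i).summable).mul_left (β i), ?_⟩
    rw [hcol]; exact hβ
  have hswap : Summable (fun p : 𝔛 × ℕ => β p.2 * w p.2 p.1 ^ 2) := hprod.prod_symm
  have hg : Summable (fun y : 𝔛 => ∑' i, β i * w i y ^ 2) := by
    have := (summable_prod_of_nonneg (f := fun p : 𝔛 × ℕ => β p.2 * w p.2 p.1 ^ 2)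
      (fun p => mul_nonneg (hβ0 p.2) (sq_nonneg _))).1 hswap
    exact this.2
  have htsum_g : ∑' y : 𝔛, (∑' i, β i * w i y ^ 2) = B := by
    rw [Summable.tsum_comm' (f := fun (i : ℕ) (y : 𝔛) => β i * w i y ^ 2) hprod
      (fun i => ((hw2 i).summable).mul_left (β i)) hsq_i, hcol]
  have hgnn : ∀ y : 𝔛, 0 ≤ ∑' i, β i * w i y ^ 2 := fun y =>
    tsum_nonneg fun i => mul_nonneg (hβ0 i) (sq_nonneg _)
  have hkey : ∀ y : 𝔛, (∑' i, β i * w i y) ^ 2 ≤ B * ∑' i, β i * w i y ^ 2 := by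
    intro y
    have hv0 : 0 ≤ ∑' i, β i * w i y := tsum_nonneg fun i => mul_nonneg (hβ0 i) (hw0 i y)
    have hBg0 : 0 ≤ B * ∑' i, β i * w i y ^ 2 := mul_nonneg hB0 (hgnn y)
    have hv_le : (∑' i, β i * w i y) ≤ Real.sqrt (B * ∑' i, β i * w i y ^ 2) := by
      refine Summable.tsum_le_of_sum_le (hsum_i y) fun F => ?_
      have hcs := Finset.sum_mul_sq_le_sq_mul_sq F (fun i => Real.sqrt (β i))
        (fun i => Real.sqrt (β i) * w i y)
      have e1 : ∀ i, Real.sqrt (β i) * (Real.sqrt (β i) * w i y) = β i * w i y := by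
        intro i; rw [← mul_assoc, Real.mul_self_sqrt (hβ0 i)]
      have e3 : ∀ i, (Real.sqrt (β i) * w i y) ^ 2 = β i * w i y ^ 2 := by
        intro i; rw [mul_pow, Real.sq_sqrt (hβ0 i)]
      simp only [e1, Real.sq_sqrt (hβ0 _), e3] at hcs
      have h1 : (∑ i ∈ F, β i) ≤ B := Summable.sum_le_tsum F (fun i _ => hβ0 i) hβ
      have h2 : (∑ i ∈ F, β i * w i y ^ 2) ≤ ∑' i, β i * w i y ^ 2 :=
        Summable.sum_le_tsum F (fun i _ => mul_nonneg (hβ0 i) (sq_nonneg _)) (hsq_i y)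
      have hF0 : 0 ≤ ∑ i ∈ F, β i * w i y :=
        Finset.sum_nonneg fun i _ => mul_nonneg (hβ0 i) (hw0 i y)
      refine (Real.le_sqrt hF0 hBg0).2 ?_
      calc (∑ i ∈ F, β i * w i y) ^ 2 ≤ (∑ i ∈ F, β i) * ∑ i ∈ F, β i * w i y ^ 2 := hcs
        _ ≤ B * ∑' i, β i * w i y ^ 2 :=
          mul_le_mul h1 h2 (Finset.sum_nonneg fun i _ =>
            mul_nonneg (hβ0 i) (sq_nonneg _)) hB0
    calc (∑' i, β i * w i y) ^ 2 ≤ Real.sqrt (B * ∑' i, β i * w i y ^ 2) ^ 2 :=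
          pow_le_pow_left₀ hv0 hv_le 2
      _ = B * ∑' i, β i * w i y ^ 2 := Real.sq_sqrt hBg0
  have hsummable : Summable (fun y : 𝔛 => (∑' i, β i * w i y) ^ 2) :=
    Summable.of_nonneg_of_le (fun y => sq_nonneg _) hkey (hg.mul_left B)
  refine ⟨hsummable, ?_⟩
  calc ∑' y : 𝔛, (∑' i, β i * w i y) ^ 2 ≤ ∑' y : 𝔛, B * ∑' i, β i * w i y ^ 2 :=
        Summable.tsum_le_tsum hkey hsummable (hg.mul_left B)
    _ = B * ∑' y : 𝔛, ∑' i, β i * w i y ^ 2 := tsum_mul_left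
    _ = B * B := by rw [htsum_g]
    _ = B ^ 2 := (sq B).symm

/-- Every internal probability measure in `Q̃P(𝔛)_ω` is quasi-invariant:
with `ξ̃ₙ` unit vectors of `ℓ²(𝔛)`, strictly positive summable weights `(αᵢ)`, and
`ξₙ(y) = ∑ᵢ αᵢ |ξ̃ₙ(sᵢ⁻¹ • y)|`, the functional
`Λ(f) = lim_ω (∑_y fₙ(y) ξₙ(y)²)/‖ξₙ‖₂²` satisfies: for every `g ∈ G` and every decreasing
sequence `(f⁽ʲ⁾)` of `[0,1]`-valued functions, `inf_j Λ(f⁽ʲ⁾) = 0` implies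
`inf_j Λ(f⁽ʲ⁾ ∘ g) = 0`. -/
theorem stmt13 {𝔛 : Type*} [Countable 𝔛]
    {G : Type*} [Group G] [Countable G] [MulAction G 𝔛]
    (s : ℕ → G) (hs : Function.Surjective s)
    (ω : Ultrafilter ℕ) (hω : (ω : Filter ℕ) ≤ Filter.cofinite)
    (ξt : ℕ → 𝔛 → ℂ) (hunit : ∀ n, HasSum (fun y => ‖ξt n y‖ ^ 2) 1)
    (α : ℕ → ℝ) (hα : ∀ i, 0 < α i) (hαsum : Summable α)
    (ξ : ℕ → 𝔛 → ℝ) (hξ : ∀ n y, ξ n y = ∑' i : ℕ, α i * ‖ξt n ((s i)⁻¹ • y)‖)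
    (g : G) (f : ℕ → ℕ → 𝔛 → ℝ)
    (hf0 : ∀ j n y, 0 ≤ f j n y) (hf1 : ∀ j n y, f j n y ≤ 1)
    (hfdec : ∀ j n y, f (j + 1) n y ≤ f j n y)
    (h : ⨅ j : ℕ, limUnder (ω : Filter ℕ)
        (fun n => (∑' y : 𝔛, f j n y * ξ n y ^ 2) / (∑' y : 𝔛, ξ n y ^ 2)) = 0) :
    ⨅ j : ℕ, limUnder (ω : Filter ℕ)
        (fun n => (∑' y : 𝔛, f j n (g • y) * ξ n y ^ 2) / (∑' y : 𝔛, ξ n y ^ 2)) = 0 := by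
  classical
  -- notation
  set w : ℕ → ℕ → 𝔛 → ℝ := fun n k y => ‖ξt n ((s k)⁻¹ • y)‖ with hwdef
  have hξt1 : ∀ n z, ‖ξt n z‖ ≤ 1 := by
    intro n z
    have h2 : ‖ξt n z‖ ^ 2 ≤ 1 := le_hasSum (hunit n) z (fun y _ => sq_nonneg _)
    nlinarith [norm_nonneg (ξt n z)]
  have hW : ∀ (n : ℕ) (t : G), HasSum (fun y : 𝔛 => ‖ξt n (t • y)‖ ^ 2) 1 := by
    intro n t
    exact (Equiv.hasSum_iff (MulAction.toPerm t)).2 (hunit n)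
  have hw0 : ∀ n k y, 0 ≤ w n k y := fun n k y => norm_nonneg _
  have hw1 : ∀ n k y, w n k y ≤ 1 := fun n k y => hξt1 n _
  have hw2 : ∀ n k, HasSum (fun y : 𝔛 => w n k y ^ 2) 1 := fun n k => hW n ((s k)⁻¹)
  choose τ hτ using fun i => hs (g * s i)
  have hsum_i : ∀ n y, Summable fun i => α i * w n i y := fun n y =>
    Summable.of_nonneg_of_le (fun i => mul_nonneg (hα i).le (hw0 n i y))
      (fun i => mul_le_of_le_one_right (hα i).le (hw1 n i y)) hαsum
  have hξ0 : ∀ n y, 0 ≤ ξ n y := by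
    intro n y; rw [hξ]
    exact tsum_nonneg fun i => mul_nonneg (hα i).le (norm_nonneg _)
  -- denominator facts
  set D : ℕ → ℝ := fun n => ∑' y : 𝔛, ξ n y ^ 2 with hDdef
  set A := ∑' i, α i with hAdef
  have hξfun : ∀ n, (fun y : 𝔛 => ξ n y ^ 2) = fun y => (∑' i, α i * w n i y) ^ 2 := by
    intro n; funext y; rw [hξ]
  have hDsum : ∀ n, Summable fun y : 𝔛 => ξ n y ^ 2 := by
    intro n; rw [hξfun n]
    exact (lemA α (fun i => (hα i).le) hαsum (w n) (hw0 n) (hw1 n) (hw2 n)).1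
  have hDleA : ∀ n, D n ≤ A ^ 2 := by
    intro n; rw [hDdef]
    simp only [hξfun n]
    exact (lemA α (fun i => (hα i).le) hαsum (w n) (hw0 n) (hw1 n) (hw2 n)).2
  have hDge : ∀ n, α 0 ^ 2 ≤ D n := by
    intro n
    have hhs : HasSum (fun y : 𝔛 => α 0 ^ 2 * w n 0 y ^ 2) (α 0 ^ 2) := by
      simpa using (hw2 n 0).mul_left (α 0 ^ 2)
    have h1 : ∀ y : 𝔛, α 0 ^ 2 * w n 0 y ^ 2 ≤ ξ n y ^ 2 := by
      intro y
      have hterm : α 0 * w n 0 y ≤ ξ n y := by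
        rw [hξ]
        exact Summable.le_tsum (hsum_i n y) 0 (fun i _ => mul_nonneg (hα i).le (hw0 n i y))
      nlinarith [mul_nonneg (hα 0).le (hw0 n 0 y), hξ0 n y]
    calc α 0 ^ 2 = ∑' y : 𝔛, α 0 ^ 2 * w n 0 y ^ 2 := hhs.tsum_eq.symm
      _ ≤ D n := Summable.tsum_le_tsum h1 hhs.summable (hDsum n)
  have hDpos : ∀ n, 0 < D n := fun n => lt_of_lt_of_le (pow_pos (hα 0) 2) (hDge n)
  -- tail
  set ε : ℕ → ℝ := fun N => ∑' i, α (i + N) with hεdef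
  have hεto : Filter.Tendsto ε Filter.atTop (𝓝 0) := tendsto_sum_nat_add α
  have hε0 : ∀ N, 0 ≤ ε N := fun N => tsum_nonneg fun i => (hα _).le
  set T : ℕ → ℕ → 𝔛 → ℝ := fun N n y => ∑' i, α (i + N) * w n (τ (i + N)) y with hTdef
  have hTfacts : ∀ N n, Summable (fun y : 𝔛 => T N n y ^ 2) ∧
      ∑' y : 𝔛, T N n y ^ 2 ≤ ε N ^ 2 := by
    intro N n
    exact lemA (fun i => α (i + N)) (fun i => (hα _).le)
      ((summable_nat_add_iff N).2 hαsum)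
      (fun i y => w n (τ (i + N)) y) (fun i y => hw0 n _ y) (fun i y => hw1 n _ y)
      (fun i => hw2 n (τ (i + N)))
  have hT0 : ∀ N n y, 0 ≤ T N n y := fun N n y =>
    tsum_nonneg fun i => mul_nonneg (hα _).le (hw0 n _ y)
  -- split of ξ n (g⁻¹ • y)
  have hτw : ∀ n i y, w n (τ i) y = ‖ξt n ((s i)⁻¹ • g⁻¹ • y)‖ := by
    intro n i y
    have : (s (τ i))⁻¹ • y = (s i)⁻¹ • g⁻¹ • y := by
      rw [hτ i, mul_inv_rev, mul_smul]
    simp only [hwdef, this]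
  have hsumτ : ∀ n y, Summable fun i => α i * w n (τ i) y := fun n y =>
    Summable.of_nonneg_of_le (fun i => mul_nonneg (hα i).le (hw0 n _ y))
      (fun i => mul_le_of_le_one_right (hα i).le (hw1 n _ y)) hαsum
  have hξginv : ∀ n y, ξ n (g⁻¹ • y) = ∑' i, α i * w n (τ i) y := by
    intro n y
    rw [hξ]
    exact tsum_congr fun i => by rw [hτw]
  have hsplit : ∀ N n y, ξ n (g⁻¹ • y)
      = (∑ i ∈ Finset.range N, α i * w n (τ i) y) + T N n y := by
    intro N n y
    rw [hξginv n y, ← Summable.sum_add_tsum_nat_add N (hsumτ n y)]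
  set C : ℕ → ℝ := fun N => ∑ i ∈ Finset.range N, α i / α (τ i) with hCdef
  have hC0 : ∀ N, 0 ≤ C N := fun N =>
    Finset.sum_nonneg fun i _ => div_nonneg (hα i).le (hα (τ i)).le
  have hHead : ∀ N n y, (∑ i ∈ Finset.range N, α i * w n (τ i) y) ≤ C N * ξ n y := by
    intro N n y
    rw [hCdef, Finset.sum_mul]
    refine Finset.sum_le_sum fun i _ => ?_
    have hterm : α (τ i) * w n (τ i) y ≤ ξ n y := by
      rw [hξ]
      exact Summable.le_tsum (hsum_i n y) (τ i) (fun k _ => mul_nonneg (hα k).le (hw0 n k y))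
    have : α i * w n (τ i) y = (α i / α (τ i)) * (α (τ i) * w n (τ i) y) := by
      field_simp [(hα (τ i)).ne']
    rw [this]
    exact mul_le_mul_of_nonneg_left hterm (div_nonneg (hα i).le (hα (τ i)).le)
  -- pointwise bound
  have hpt : ∀ N j n y, f j n y * ξ n (g⁻¹ • y) ^ 2
      ≤ 2 * C N ^ 2 * (f j n y * ξ n y ^ 2) + 2 * T N n y ^ 2 := by
    intro N j n y
    have ha0 : 0 ≤ ∑ i ∈ Finset.range N, α i * w n (τ i) y :=
      Finset.sum_nonneg fun i _ => mul_nonneg (hα i).le (hw0 n _ y)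
    have h1 : ξ n (g⁻¹ • y) ^ 2 ≤ 2 * (C N * ξ n y) ^ 2 + 2 * T N n y ^ 2 := by
      rw [hsplit N n y]
      nlinarith [hHead N n y, hT0 N n y, sq_nonneg (C N * ξ n y - T N n y), ha0,
        mul_nonneg (hC0 N) (hξ0 n y)]
    calc f j n y * ξ n (g⁻¹ • y) ^ 2
        ≤ f j n y * (2 * (C N * ξ n y) ^ 2 + 2 * T N n y ^ 2) :=
          mul_le_mul_of_nonneg_left h1 (hf0 j n y)
      _ = 2 * C N ^ 2 * (f j n y * ξ n y ^ 2) + 2 * (f j n y * T N n y ^ 2) := by ring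
      _ ≤ 2 * C N ^ 2 * (f j n y * ξ n y ^ 2) + 2 * T N n y ^ 2 := by
          have : f j n y * T N n y ^ 2 ≤ T N n y ^ 2 :=
            mul_le_of_le_one_left (sq_nonneg _) (hf1 j n y)
          linarith
  -- summabilities per j n
  have hsumfx : ∀ j n, Summable fun y : 𝔛 => f j n y * ξ n y ^ 2 := fun j n =>
    Summable.of_nonneg_of_le (fun y => mul_nonneg (hf0 j n y) (sq_nonneg _))
      (fun y => mul_le_of_le_one_left (sq_nonneg _) (hf1 j n y)) (hDsum n)
  have hsuminv : ∀ n, Summable fun y : 𝔛 => ξ n (g⁻¹ • y) ^ 2 := fun n =>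
    ((MulAction.toPerm g⁻¹ : Equiv.Perm 𝔛).summable_iff
      (f := fun y => ξ n y ^ 2)).2 (hDsum n)
  have hsumL : ∀ j n, Summable fun y : 𝔛 => f j n y * ξ n (g⁻¹ • y) ^ 2 := fun j n =>
    Summable.of_nonneg_of_le (fun y => mul_nonneg (hf0 j n y) (sq_nonneg _))
      (fun y => mul_le_of_le_one_left (sq_nonneg _) (hf1 j n y)) (hsuminv n)
  -- reindexing
  have hre : ∀ j n, ∑' y : 𝔛, f j n y * ξ n (g⁻¹ • y) ^ 2
      = ∑' y : 𝔛, f j n (g • y) * ξ n y ^ 2 := by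
    intro j n
    rw [← Equiv.tsum_eq (MulAction.toPerm g⁻¹ : Equiv.Perm 𝔛)
      (fun y => f j n (g • y) * ξ n y ^ 2)]
    exact tsum_congr fun y => by
      simp [MulAction.toPerm_apply, smul_inv_smul]
  -- main numerator inequality
  have hnum : ∀ N j n, (∑' y : 𝔛, f j n (g • y) * ξ n y ^ 2)
      ≤ 2 * C N ^ 2 * (∑' y : 𝔛, f j n y * ξ n y ^ 2) + 2 * ε N ^ 2 := by
    intro N j n
    have hsumR : Summable fun y : 𝔛 =>
        2 * C N ^ 2 * (f j n y * ξ n y ^ 2) + 2 * T N n y ^ 2 :=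
      ((hsumfx j n).mul_left _).add ((hTfacts N n).1.mul_left 2)
    calc (∑' y : 𝔛, f j n (g • y) * ξ n y ^ 2)
        = ∑' y : 𝔛, f j n y * ξ n (g⁻¹ • y) ^ 2 := (hre j n).symm
      _ ≤ ∑' y : 𝔛, (2 * C N ^ 2 * (f j n y * ξ n y ^ 2) + 2 * T N n y ^ 2) :=
          Summable.tsum_le_tsum (hpt N j n) (hsumL j n) hsumR
      _ = 2 * C N ^ 2 * (∑' y : 𝔛, f j n y * ξ n y ^ 2) + 2 * ∑' y : 𝔛, T N n y ^ 2 := by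
          rw [Summable.tsum_add ((hsumfx j n).mul_left _) ((hTfacts N n).1.mul_left 2),
            tsum_mul_left, tsum_mul_left]
      _ ≤ 2 * C N ^ 2 * (∑' y : 𝔛, f j n y * ξ n y ^ 2) + 2 * ε N ^ 2 := by
          have := (hTfacts N n).2
          linarith
  -- ratio sequences
  set r : ℕ → ℕ → ℝ := fun j n => (∑' y : 𝔛, f j n y * ξ n y ^ 2) / D n with hrdef
  set r' : ℕ → ℕ → ℝ := fun j n => (∑' y : 𝔛, f j n (g • y) * ξ n y ^ 2) / D n with hr'def
  have hrIcc : ∀ j n, r j n ∈ Set.Icc (0 : ℝ) 1 := by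
    intro j n
    constructor
    · exact div_nonneg (tsum_nonneg fun y => mul_nonneg (hf0 j n y) (sq_nonneg _))
        (hDpos n).le
    · rw [div_le_one (hDpos n)]
      exact Summable.tsum_le_tsum (fun y => mul_le_of_le_one_left (sq_nonneg _) (hf1 j n y))
        (hsumfx j n) (hDsum n)
  have hsumfx' : ∀ j n, Summable fun y : 𝔛 => f j n (g • y) * ξ n y ^ 2 := fun j n =>
    Summable.of_nonneg_of_le (fun y => mul_nonneg (hf0 j n _) (sq_nonneg _))
      (fun y => mul_le_of_le_one_left (sq_nonneg _) (hf1 j n _)) (hDsum n)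
  have hr'Icc : ∀ j n, r' j n ∈ Set.Icc (0 : ℝ) 1 := by
    intro j n
    constructor
    · exact div_nonneg (tsum_nonneg fun y => mul_nonneg (hf0 j n _) (sq_nonneg _))
        (hDpos n).le
    · rw [div_le_one (hDpos n)]
      exact Summable.tsum_le_tsum (fun y => mul_le_of_le_one_left (sq_nonneg _) (hf1 j n _))
        (hsumfx' j n) (hDsum n)
  -- ratio inequality
  have hratio : ∀ N j n, r' j n ≤ 2 * C N ^ 2 * r j n + 2 * ε N ^ 2 / α 0 ^ 2 := by
    intro N j n
    have h1 : r' j n ≤ (2 * C N ^ 2 * (∑' y : 𝔛, f j n y * ξ n y ^ 2) + 2 * ε N ^ 2) / D n :=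
      (div_le_div_iff_of_pos_right (hDpos n)).2 (hnum N j n)
    have h2 : (2 * C N ^ 2 * (∑' y : 𝔛, f j n y * ξ n y ^ 2) + 2 * ε N ^ 2) / D n
        = 2 * C N ^ 2 * r j n + 2 * ε N ^ 2 / D n := by
      rw [add_div, mul_div_assoc]
    have h3 : 2 * ε N ^ 2 / D n ≤ 2 * ε N ^ 2 / α 0 ^ 2 :=
      div_le_div_of_nonneg_left (by positivity) (pow_pos (hα 0) 2) (hDge n)
    rw [h2] at h1
    linarith
  -- limits along the ultrafilter
  set L : ℕ → ℝ := fun j => limUnder (ω : Filter ℕ) (r j) with hLdef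
  set L' : ℕ → ℝ := fun j => limUnder (ω : Filter ℕ) (r' j) with hL'def
  have hLt : ∀ j, Filter.Tendsto (r j) (ω : Filter ℕ) (𝓝 (L j)) := fun j =>
    ulim_tendsto ω (r j) (hrIcc j)
  have hL't : ∀ j, Filter.Tendsto (r' j) (ω : Filter ℕ) (𝓝 (L' j)) := fun j =>
    ulim_tendsto ω (r' j) (hr'Icc j)
  have hL0 : ∀ j, 0 ≤ L j := fun j =>
    ge_of_tendsto' (hLt j) (fun n => (hrIcc j n).1)
  have hL'0 : ∀ j, 0 ≤ L' j := fun j =>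
    ge_of_tendsto' (hL't j) (fun n => (hr'Icc j n).1)
  have hLlim : ∀ N j, L' j ≤ 2 * C N ^ 2 * L j + 2 * ε N ^ 2 / α 0 ^ 2 := by
    intro N j
    refine le_of_tendsto_of_tendsto' (hL't j) ?_ (fun n => hratio N j n)
    exact (((hLt j).const_mul (2 * C N ^ 2)).add tendsto_const_nhds)
  have hinf : (⨅ j, L j) = 0 := h
  have hgoal : (⨅ j, L' j) = 0 := by
    have hbdd : BddBelow (Set.range L') := ⟨0, fun x ⟨j, hj⟩ => hj ▸ hL'0 j⟩
    refine le_antisymm ?_ (le_ciInf hL'0)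
    refine le_of_forall_pos_le_add fun δ hδ => ?_
    -- choose N with small tail
    have htail : Filter.Tendsto (fun N => 2 * ε N ^ 2 / α 0 ^ 2) Filter.atTop (𝓝 0) := by
      have : Filter.Tendsto (fun N => ε N ^ 2) Filter.atTop (𝓝 0) := by
        simpa using (hεto.pow 2)
      simpa using ((this.const_mul 2).div_const (α 0 ^ 2))
    obtain ⟨N, hN⟩ := (htail.eventually_lt_const (by linarith : (0:ℝ) < δ / 2)).exists
    set δ' : ℝ := δ / (2 * (2 * C N ^ 2 + 1)) with hδ'def
    have hδ'pos : 0 < δ' := by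
      have : (0:ℝ) < 2 * (2 * C N ^ 2 + 1) := by positivity
      exact div_pos hδ this
    have hlt : (⨅ j, L j) < δ' := by rw [hinf]; exact hδ'pos
    obtain ⟨j, hj⟩ := exists_lt_of_ciInf_lt hlt
    have heq : (2 * C N ^ 2 + 1) * δ' = δ / 2 := by
      rw [hδ'def]
      have hne : (2 * C N ^ 2 + 1) ≠ 0 := by positivity
      field_simp
    have hfin : L' j ≤ 0 + δ := by
      have h1 := hLlim N j
      have h2 : 2 * C N ^ 2 * L j ≤ (2 * C N ^ 2 + 1) * L j := by
        nlinarith [hL0 j]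
      have h3 : (2 * C N ^ 2 + 1) * L j ≤ (2 * C N ^ 2 + 1) * δ' := by
        have : (0:ℝ) ≤ 2 * C N ^ 2 + 1 := by positivity
        exact mul_le_mul_of_nonneg_left hj.le this
      linarith
    exact le_trans (ciInf_le hbdd j) hfin
  exact hgoal
end
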